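/- arXiv:1904.04017 — 10 statements merged into one kernel-verified Lean document; each statement's English description precedes it below -/
import Mathlib

section
/- Let p₀, p₁, …, p_D be probability densities with respect to μ and, for θ in the open simplex {θ ∈ ℝ^D : θᵢ > 0, Σᵢ θᵢ < 1}, let m_θ = (1 − Σᵢ θᵢ) p₀ + Σᵢ θᵢ pᵢ be the corresponding mixture-family density, and set F(θ) = −h(m_θ) = ∫ m_θ log m_θ dμ (the Shannon negentropy). If θ₁, θ₂ lie in the open simplex and the entropies h(m_{θ₁}), h(m_{θ₂}), h(m_{(θ₁+θ₂)/2}) are finite, then the Jensen–Shannon divergence satisfies JS(m_{θ₁}, m_{θ₂}) = (F(θ₁) + F(θ₂))/2 − F((θ₁+θ₂)/2), i.e., it equals the Jensen divergence of F at (θ₁, θ₂). -/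
open MeasureTheory Real

/-- For a mixture family `m_θ = (1 − Σᵢ θᵢ) p₀ + Σᵢ θᵢ pᵢ` with negentropy
generator `F(θ) = ∫ m_θ log m_θ dμ`, the Jensen–Shannon divergence between `m_{θ₁}` and
`m_{θ₂}` equals the Jensen divergence `(F(θ₁)+F(θ₂))/2 − F((θ₁+θ₂)/2)`. -/
theorem JS_mixture_family_eq_Jensen_divergence
    {X : Type*} [MeasurableSpace X] (μ : Measure X) (D : ℕ)
    (p0 : X → ℝ) (p : Fin D → X → ℝ)
    (hm0 : Measurable p0) (hm : ∀ i, Measurable (p i))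
    (h00 : ∀ x, 0 ≤ p0 x) (h0 : ∀ i x, 0 ≤ p i x)
    (h10 : ∫ x, p0 x ∂μ = 1) (h1 : ∀ i, ∫ x, p i x ∂μ = 1)
    (m : (Fin D → ℝ) → X → ℝ)
    (hmdef : ∀ θ x, m θ x = (1 - ∑ i, θ i) * p0 x + ∑ i, θ i * p i x)
    (F : (Fin D → ℝ) → ℝ)
    (hF : ∀ θ, F θ = ∫ x, m θ x * Real.log (m θ x) ∂μ)
    (θ₁ θ₂ : Fin D → ℝ)
    (hθ₁ : (∀ i, 0 < θ₁ i) ∧ ∑ i, θ₁ i < 1)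
    (hθ₂ : (∀ i, 0 < θ₂ i) ∧ ∑ i, θ₂ i < 1)
    (hint1 : Integrable (fun x => m θ₁ x * Real.log (m θ₁ x)) μ)
    (hint2 : Integrable (fun x => m θ₂ x * Real.log (m θ₂ x)) μ)
    (hint12 : Integrable (fun x => m ((θ₁ + θ₂) / 2) x * Real.log (m ((θ₁ + θ₂) / 2) x)) μ) :
    (1 / 2) * ∫ x, m θ₁ x * Real.log (m θ₁ x / ((m θ₁ x + m θ₂ x) / 2)) ∂μ
      + (1 / 2) * ∫ x, m θ₂ x * Real.log (m θ₂ x / ((m θ₁ x + m θ₂ x) / 2)) ∂μ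
      = (F θ₁ + F θ₂) / 2 - F ((θ₁ + θ₂) / 2) := by
  have h2i : ∀ i, ((θ₁ + θ₂) / 2 : Fin D → ℝ) i = (θ₁ i + θ₂ i) / 2 := by
    intro i
    simp [Pi.div_apply, Pi.add_apply]
  have hq : ∀ x, m ((θ₁ + θ₂) / 2) x = (m θ₁ x + m θ₂ x) / 2 := by
    intro x
    simp only [hmdef, h2i]
    rw [show (∑ i, (θ₁ i + θ₂ i) / 2) = ((∑ i, θ₁ i) + ∑ i, θ₂ i) / 2 by
      rw [← Finset.sum_add_distrib, Finset.sum_div]]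
    rw [show (∑ i, (θ₁ i + θ₂ i) / 2 * p i x)
        = ((∑ i, θ₁ i * p i x) + ∑ i, θ₂ i * p i x) / 2 by
      rw [← Finset.sum_add_distrib, Finset.sum_div]
      exact Finset.sum_congr rfl fun i _ => by ring]
    ring
  -- nonnegativity
  have hnn : ∀ (θ : Fin D → ℝ), (∀ i, 0 < θ i) → (∑ i, θ i) < 1 → ∀ x, 0 ≤ m θ x := by
    intro θ hpos hsum x
    rw [hmdef]
    have : 0 ≤ (1 - ∑ i, θ i) * p0 x :=
      mul_nonneg (by linarith) (h00 x)
    have h2 : 0 ≤ ∑ i, θ i * p i x :=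
      Finset.sum_nonneg fun i _ => mul_nonneg (hpos i).le (h0 i x)
    linarith
  have hnn1 := hnn θ₁ hθ₁.1 hθ₁.2
  have hnn2 := hnn θ₂ hθ₂.1 hθ₂.2
  set q : X → ℝ := fun x => m ((θ₁ + θ₂) / 2) x
  have hq' : ∀ x, q x = (m θ₁ x + m θ₂ x) / 2 := hq
  have hqnn : ∀ x, 0 ≤ q x := by
    intro x
    rw [hq' x]
    have := hnn1 x; have := hnn2 x; linarith
  -- measurability
  have hmeas : ∀ θ : Fin D → ℝ, Measurable (fun x => m θ x) := by
    intro θ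
    have : (fun x => m θ x) = fun x => (1 - ∑ i, θ i) * p0 x + ∑ i, θ i * p i x := by
      funext x; exact hmdef θ x
    rw [this]
    exact ((hm0.const_mul _).add (Finset.measurable_sum _ fun i _ => (hm i).const_mul _))
  have hmeasq : Measurable q := hmeas _
  -- integrability of pᵢ log q
  have hintlog : ∀ (θ : Fin D → ℝ), (∀ x, 0 ≤ m θ x) → (∀ x, m θ x ≤ 2 * q x) →
      Integrable (fun x => m θ x * Real.log (q x)) μ := by
    intro θ hnnθ hle
    have hdom : Integrable (fun x => 2 * (q x * Real.log (q x))) μ := hint12.const_mul 2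
    refine hdom.mono ?_ ?_
    · exact ((hmeas θ).mul (hmeasq.log)).aestronglyMeasurable
    · filter_upwards with x
      rw [Real.norm_eq_abs, Real.norm_eq_abs, abs_mul, abs_mul, abs_mul]
      rw [abs_of_nonneg (hnnθ x), abs_of_nonneg (hqnn x)]
      have habs : |(2:ℝ)| = 2 := by norm_num
      rw [habs]
      calc m θ x * |Real.log (q x)| ≤ 2 * q x * |Real.log (q x)| :=
            mul_le_mul_of_nonneg_right (hle x) (abs_nonneg _)
        _ = 2 * (q x * |Real.log (q x)|) := by ring
  have hle1 : ∀ x, m θ₁ x ≤ 2 * q x := fun x => by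
    rw [hq' x]; have := hnn2 x; linarith
  have hle2 : ∀ x, m θ₂ x ≤ 2 * q x := fun x => by
    rw [hq' x]; have := hnn1 x; linarith
  have hil1 := hintlog θ₁ hnn1 hle1
  have hil2 := hintlog θ₂ hnn2 hle2
  -- pointwise splitting
  have hsplit : ∀ (θ : Fin D → ℝ), (∀ x, 0 ≤ m θ x) → (∀ x, m θ x ≤ 2 * q x) →
      ∀ x, m θ x * Real.log (m θ x / ((m θ₁ x + m θ₂ x) / 2))
        = m θ x * Real.log (m θ x) - m θ x * Real.log (q x) := by
    intro θ hnnθ hle x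
    rw [← hq' x]
    rcases eq_or_lt_of_le (hnnθ x) with h | h
    · rw [← h]; simp
    · have hqpos : 0 < q x := by
        have := hle x; linarith
      rw [Real.log_div (ne_of_gt h) (ne_of_gt hqpos), mul_sub]
  have hi1 : ∫ x, m θ₁ x * Real.log (m θ₁ x / ((m θ₁ x + m θ₂ x) / 2)) ∂μ
      = F θ₁ - ∫ x, m θ₁ x * Real.log (q x) ∂μ := by
    rw [hF]
    rw [show (fun x => m θ₁ x * Real.log (m θ₁ x / ((m θ₁ x + m θ₂ x) / 2)))
        = fun x => m θ₁ x * Real.log (m θ₁ x) - m θ₁ x * Real.log (q x) from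
      funext (hsplit θ₁ hnn1 hle1)]
    exact integral_sub hint1 hil1
  have hi2 : ∫ x, m θ₂ x * Real.log (m θ₂ x / ((m θ₁ x + m θ₂ x) / 2)) ∂μ
      = F θ₂ - ∫ x, m θ₂ x * Real.log (q x) ∂μ := by
    rw [hF]
    rw [show (fun x => m θ₂ x * Real.log (m θ₂ x / ((m θ₁ x + m θ₂ x) / 2)))
        = fun x => m θ₂ x * Real.log (m θ₂ x) - m θ₂ x * Real.log (q x) from
      funext (hsplit θ₂ hnn2 hle2)]
    exact integral_sub hint2 hil2
  have hqq : ∀ x, m ((θ₁ + θ₂) / 2) x = q x := fun _ => rfl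
  have hsum : (∫ x, m θ₁ x * Real.log (q x) ∂μ) + (∫ x, m θ₂ x * Real.log (q x) ∂μ)
      = 2 * F ((θ₁ + θ₂) / 2) := by
    rw [hF, ← integral_add hil1 hil2]
    have hfun : (fun x => m θ₁ x * Real.log (q x) + m θ₂ x * Real.log (q x))
        = fun x => (2:ℝ) • (m ((θ₁ + θ₂) / 2) x * Real.log (m ((θ₁ + θ₂) / 2) x)) := by
      funext x
      simp only [smul_eq_mul, hqq]
      rw [hq' x]
      ring
    rw [hfun, integral_smul, smul_eq_mul]
  rw [hi1, hi2]
  linarith [hsum]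
end

section
/- Let p and q be probability densities with respect to μ, let α ∈ (0,1), and let M_α : (0,∞)×(0,∞) → (0,∞) be a weighted mean that dominates the weighted arithmetic mean, i.e., M_α(x,y) ≥ (1−α)x + αy for all x, y > 0. Assume Z = ∫ M_α(p(x), q(x)) dμ(x) is finite and positive, and let the M-mixture be (pq)_α^M = M_α(p,q)/Z. Then KL(p : (pq)_α^M) ≤ log Z − log(1−α) and KL(q : (pq)_α^M) ≤ log Z − log α; hence the skew M-Jensen–Shannon divergence JS^{M_α}(p:q) = (1−α)·KL(p : (pq)_α^M) + α·KL(q : (pq)_α^M) satisfies JS^{M_α}(p:q) ≤ log Z + h_b(α), where h_b(α) = −(1−α)log(1−α) − α log α. In particular, for α = 1/2, JS^{M_{1/2}}(p:q) ≤ log(2Z). -/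
open MeasureTheory Real

/-- If a weighted mean `M` dominates the weighted arithmetic mean and
`Z = ∫ M(p,q) dμ ∈ (0,∞)`, then `KL(p : M(p,q)/Z) ≤ log Z − log(1−α)`,
`KL(q : M(p,q)/Z) ≤ log Z − log α`, and the skew M-Jensen–Shannon divergence is bounded
by `log Z + h_b(α)`; in particular for `α = 1/2` it is bounded by `log(2Z)`. -/
theorem M_JSD_upper_bound
    {X : Type*} [MeasurableSpace X] (μ : Measure X)
    (p q : X → ℝ) (hpm : Measurable p) (hqm : Measurable q)
    (hp0 : ∀ᵐ x ∂μ, 0 < p x) (hq0 : ∀ᵐ x ∂μ, 0 < q x)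
    (hp1 : ∫ x, p x ∂μ = 1) (hq1 : ∫ x, q x ∂μ = 1)
    (α : ℝ) (hα : α ∈ Set.Ioo (0 : ℝ) 1)
    (M : ℝ → ℝ → ℝ)
    (hMpos : ∀ x y : ℝ, 0 < x → 0 < y → 0 < M x y)
    (hMdom : ∀ x y : ℝ, 0 < x → 0 < y → (1 - α) * x + α * y ≤ M x y)
    (hMint : Integrable (fun x => M (p x) (q x)) μ)
    (Z : ℝ) (hZ : Z = ∫ x, M (p x) (q x) ∂μ) (hZpos : 0 < Z) :
    (∫ x, p x * Real.log (p x / (M (p x) (q x) / Z)) ∂μ ≤ Real.log Z - Real.log (1 - α)) ∧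
    (∫ x, q x * Real.log (q x / (M (p x) (q x) / Z)) ∂μ ≤ Real.log Z - Real.log α) ∧
    ((1 - α) * ∫ x, p x * Real.log (p x / (M (p x) (q x) / Z)) ∂μ
      + α * ∫ x, q x * Real.log (q x / (M (p x) (q x) / Z)) ∂μ
      ≤ Real.log Z + (-(1 - α) * Real.log (1 - α) - α * Real.log α)) ∧
    (α = 1 / 2 →
      (1 - α) * ∫ x, p x * Real.log (p x / (M (p x) (q x) / Z)) ∂μ
        + α * ∫ x, q x * Real.log (q x / (M (p x) (q x) / Z)) ∂μ
        ≤ Real.log (2 * Z)) := by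

  obtain ⟨hα0, hα1⟩ := hα
  have h1α : 0 < 1 - α := by linarith
  have hpInt : Integrable p μ := by
    by_contra h; rw [integral_undef h] at hp1; norm_num at hp1
  have hqInt : Integrable q μ := by
    by_contra h; rw [integral_undef h] at hq1; norm_num at hq1
  have hZ1 : 1 ≤ Z := by
    have hcomb : Integrable (fun x => (1 - α) * p x + α * q x) μ :=
      (hpInt.const_mul _).add (hqInt.const_mul _)
    have hle : (∫ x, ((1 - α) * p x + α * q x) ∂μ) ≤ ∫ x, M (p x) (q x) ∂μ := by
      refine integral_mono_ae hcomb hMint ?_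
      filter_upwards [hp0, hq0] with x hpx hqx
      exact hMdom _ _ hpx hqx
    have heq : (∫ x, ((1 - α) * p x + α * q x) ∂μ) = 1 := by
      rw [integral_add (hpInt.const_mul _) (hqInt.const_mul _),
        integral_const_mul, integral_const_mul, hp1, hq1]
      ring
    rw [hZ]; linarith [heq ▸ hle]
  have key : ∀ (f : X → ℝ), Integrable f μ → (∀ᵐ x ∂μ, 0 < f x) →
      (∫ x, f x ∂μ) = 1 → ∀ w : ℝ, 0 < w → w ≤ 1 →
      (∀ᵐ x ∂μ, w * f x ≤ M (p x) (q x)) →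
      ∫ x, f x * Real.log (f x / (M (p x) (q x) / Z)) ∂μ ≤ Real.log Z - Real.log w := by
    intro f hfInt hf0 hf1 w hw0 hw1 hdom
    have hCnn : 0 ≤ Real.log Z - Real.log w :=
      sub_nonneg.mpr (le_trans (Real.log_nonpos hw0.le hw1) (Real.log_nonneg hZ1))
    have hae : ∀ᵐ x ∂μ, f x * Real.log (f x / (M (p x) (q x) / Z))
        ≤ f x * (Real.log Z - Real.log w) := by
      filter_upwards [hf0, hp0, hq0, hdom] with x hfx hpx hqx hdx
      have hM : 0 < M (p x) (q x) := hMpos _ _ hpx hqx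
      have harg : 0 < f x / (M (p x) (q x) / Z) := by positivity
      refine mul_le_mul_of_nonneg_left ?_ hfx.le
      have h1 : f x / (M (p x) (q x) / Z) ≤ Z / w := by
        rw [div_div_eq_mul_div, div_le_div_iff₀ hM hw0]
        nlinarith
      calc Real.log (f x / (M (p x) (q x) / Z)) ≤ Real.log (Z / w) :=
            Real.log_le_log harg h1
        _ = Real.log Z - Real.log w := Real.log_div hZpos.ne' hw0.ne'
    by_cases hI : Integrable (fun x => f x * Real.log (f x / (M (p x) (q x) / Z))) μ
    · calc ∫ x, f x * Real.log (f x / (M (p x) (q x) / Z)) ∂μ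
          ≤ ∫ x, f x * (Real.log Z - Real.log w) ∂μ :=
            integral_mono_ae hI (hfInt.mul_const _) hae
        _ = Real.log Z - Real.log w := by rw [integral_mul_const, hf1, one_mul]
    · rw [integral_undef hI]; exact hCnn
  have hdp : ∀ᵐ x ∂μ, (1 - α) * p x ≤ M (p x) (q x) := by
    filter_upwards [hp0, hq0] with x hpx hqx
    nlinarith [hMdom _ _ hpx hqx]
  have hdq : ∀ᵐ x ∂μ, α * q x ≤ M (p x) (q x) := by
    filter_upwards [hp0, hq0] with x hpx hqx
    nlinarith [hMdom _ _ hpx hqx]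
  have hIp := key p hpInt hp0 hp1 (1 - α) h1α (by linarith) hdp
  have hIq := key q hqInt hq0 hq1 α hα0 (by linarith) hdq
  refine ⟨hIp, hIq, ?_, ?_⟩
  · nlinarith [mul_le_mul_of_nonneg_left hIp h1α.le,
      mul_le_mul_of_nonneg_left hIq hα0.le]
  · intro hhalf
    have hb : -(1 - α) * Real.log (1 - α) - α * Real.log α = Real.log 2 := by
      subst hhalf
      norm_num
      rw [show (1 : ℝ) / 2 = 2⁻¹ by norm_num, Real.log_inv]
      ring
    have hlog : Real.log (2 * Z) = Real.log 2 + Real.log Z :=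
      Real.log_mul two_ne_zero hZpos.ne'
    nlinarith [mul_le_mul_of_nonneg_left hIp h1α.le,
      mul_le_mul_of_nonneg_left hIq hα0.le]
end

section
/- Let θ₁, θ₂ ∈ Θ, α ∈ (0,1), and assume F is differentiable at θ₁ and θ₂ with ∇F(θᵢ) = ∫ x p_{θᵢ}(x) dμ(x) for i = 1, 2, and that the relevant integrals are finite. Then the α-skew geometric Jensen–Shannon divergence admits the closed form (1−α)·KL(p_{θ₁} : p_{(θ₁θ₂)_α}) + α·KL(p_{θ₂} : p_{(θ₁θ₂)_α}) = (1−α)·B_F((θ₁θ₂)_α : θ₁) + α·B_F((θ₁θ₂)_α : θ₂), where p_{(θ₁θ₂)_α} is the normalized weighted geometric mixture of p_{θ₁} and p_{θ₂}. -/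
open MeasureTheory Real
open scoped RealInnerProductSpace

open MeasureTheory Real
open scoped RealInnerProductSpace

lemma KL_term_aux
    (d : ℕ) (μ : Measure (EuclideanSpace ℝ (Fin d))) (hμ : μ ≠ 0)
    (F : EuclideanSpace ℝ (Fin d) → ℝ)
    (hF : ∀ θ, F θ = Real.log (∫ x, Real.exp ⟪θ, x⟫ ∂μ))
    (p : EuclideanSpace ℝ (Fin d) → EuclideanSpace ℝ (Fin d) → ℝ)
    (hp : ∀ θ x, p θ x = Real.exp (⟪θ, x⟫ - F θ))
    (θ θ' : EuclideanSpace ℝ (Fin d))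
    (hθ : Integrable (fun x => Real.exp ⟪θ, x⟫) μ)
    (g : EuclideanSpace ℝ (Fin d)) (hg : g = ∫ x, p θ x • x ∂μ)
    (hint : Integrable (fun x => p θ x • x) μ) :
    ∫ x, p θ x * Real.log (p θ x / p θ' x) ∂μ = F θ' - F θ - ⟪θ' - θ, g⟫ := by
  have hpos : 0 < ∫ x, Real.exp ⟪θ, x⟫ ∂μ := by
    rw [integral_pos_iff_support_of_nonneg (fun x => (Real.exp_pos _).le) hθ]
    have : Function.support (fun x => Real.exp ⟪θ, x⟫) = Set.univ := by
      ext x; simp [Real.exp_ne_zero]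
    rw [this]
    exact Measure.measure_univ_pos.mpr hμ
  have hexpF : Real.exp (F θ) = ∫ x, Real.exp ⟪θ, x⟫ ∂μ := by
    rw [hF]; exact Real.exp_log hpos
  have hpeq : p θ = fun x => Real.exp ⟪θ, x⟫ / Real.exp (F θ) :=
    funext fun x => by rw [hp, Real.exp_sub]
  have hpint : Integrable (p θ) μ := by
    rw [hpeq]; exact hθ.div_const _
  have hone : ∫ x, p θ x ∂μ = 1 := by
    rw [hpeq, integral_div, ← hexpF, div_self (Real.exp_ne_zero _)]
  have hpt : ∀ x, p θ x * Real.log (p θ x / p θ' x)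
      = ⟪θ - θ', p θ x • x⟫ + (F θ' - F θ) * p θ x := by
    intro x
    rw [hp, hp, Real.log_div (Real.exp_ne_zero _) (Real.exp_ne_zero _),
      Real.log_exp, Real.log_exp, real_inner_smul_right, inner_sub_left]
    ring
  rw [integral_congr_ae (Filter.Eventually.of_forall hpt),
    integral_add (hint.const_inner _) (hpint.const_mul _),
    integral_inner hint, integral_const_mul, hone, ← hg]
  simp only [inner_sub_left]
  ring


/-- In an exponential family with cumulant function `F`, the α-skew
geometric Jensen–Shannon divergence admits the closed form
`(1−α)·KL(p_{θ₁} : p_{θ̄}) + α·KL(p_{θ₂} : p_{θ̄})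
   = (1−α)·B_F(θ̄ : θ₁) + α·B_F(θ̄ : θ₂)` where `θ̄ = (1−α)θ₁ + αθ₂`. -/
theorem G_JSD_closed_form_exponential_family
    (d : ℕ) (μ : Measure (EuclideanSpace ℝ (Fin d))) [SigmaFinite μ]
    (F : EuclideanSpace ℝ (Fin d) → ℝ)
    (hF : ∀ θ, F θ = Real.log (∫ x, Real.exp ⟪θ, x⟫ ∂μ))
    (p : EuclideanSpace ℝ (Fin d) → EuclideanSpace ℝ (Fin d) → ℝ)
    (hp : ∀ θ x, p θ x = Real.exp (⟪θ, x⟫ - F θ))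
    (θ₁ θ₂ : EuclideanSpace ℝ (Fin d))
    (h1 : Integrable (fun x => Real.exp ⟪θ₁, x⟫) μ)
    (h2 : Integrable (fun x => Real.exp ⟪θ₂, x⟫) μ)
    (α : ℝ) (hα : α ∈ Set.Ioo (0 : ℝ) 1)
    (g₁ g₂ : EuclideanSpace ℝ (Fin d))
    (hg₁ : HasGradientAt F g₁ θ₁) (hg₂ : HasGradientAt F g₂ θ₂)
    (hg₁' : g₁ = ∫ x, p θ₁ x • x ∂μ) (hg₂' : g₂ = ∫ x, p θ₂ x • x ∂μ)
    (hint₁ : Integrable (fun x => p θ₁ x • x) μ)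
    (hint₂ : Integrable (fun x => p θ₂ x • x) μ)
    (hKL₁ : Integrable
      (fun x => p θ₁ x * Real.log (p θ₁ x / p ((1 - α) • θ₁ + α • θ₂) x)) μ)
    (hKL₂ : Integrable
      (fun x => p θ₂ x * Real.log (p θ₂ x / p ((1 - α) • θ₁ + α • θ₂) x)) μ) :
    (1 - α) * ∫ x, p θ₁ x * Real.log (p θ₁ x / p ((1 - α) • θ₁ + α • θ₂) x) ∂μ
      + α * ∫ x, p θ₂ x * Real.log (p θ₂ x / p ((1 - α) • θ₁ + α • θ₂) x) ∂μ
    = (1 - α) * (F ((1 - α) • θ₁ + α • θ₂) - F θ₁ - ⟪((1 - α) • θ₁ + α • θ₂) - θ₁, g₁⟫)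
      + α * (F ((1 - α) • θ₁ + α • θ₂) - F θ₂ - ⟪((1 - α) • θ₁ + α • θ₂) - θ₂, g₂⟫) := by
  by_cases hμ : μ = 0
  · subst hμ
    simp only [integral_zero_measure, hg₁', hg₂', inner_zero_right]
    have hF0 : ∀ θ, F θ = 0 := fun θ => by rw [hF]; simp
    simp [hF0]
  · rw [KL_term_aux d μ hμ F hF p hp θ₁ _ h1 g₁ hg₁' hint₁,
      KL_term_aux d μ hμ F hF p hp θ₂ _ h2 g₂ hg₂' hint₂]
end

section
/- Let θ₁, θ₂ ∈ Θ, α ∈ (0,1), write θ̄ = (θ₁θ₂)_α = (1−α)θ₁ + αθ₂, and assume F is differentiable at θ̄ with ∇F(θ̄) = ∫ x p_{θ̄}(x) dμ(x), the relevant integrals being finite. Then the α-skew geometric Jensen–Shannon symmetrization of the reverse Kullback–Leibler divergence equals the α-skew Jensen divergence of the cumulant function: (1−α)·KL(p_{θ̄} : p_{θ₁}) + α·KL(p_{θ̄} : p_{θ₂}) = J_F^α(θ₁:θ₂) = (1−α)F(θ₁) + αF(θ₂) − F(θ̄). -/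
open MeasureTheory Real
open scoped RealInnerProductSpace

/-- In an exponential family with cumulant function `F`, the α-skew
geometric Jensen–Shannon symmetrization of the reverse KL divergence equals the
α-skew Jensen divergence:
`(1−α)·KL(p_{tbar} : p_{θ₁}) + α·KL(p_{tbar} : p_{θ₂}) = (1−α)F(θ₁) + αF(θ₂) − F(tbar)`
where `tbar = (1−α)θ₁ + αθ₂`. -/
theorem G_JS_reverse_KL_eq_Jensen_divergence
    (d : ℕ) (μ : Measure (EuclideanSpace ℝ (Fin d))) [SigmaFinite μ]
    (F : EuclideanSpace ℝ (Fin d) → ℝ)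
    (hF : ∀ θ, F θ = Real.log (∫ x, Real.exp ⟪θ, x⟫ ∂μ))
    (p : EuclideanSpace ℝ (Fin d) → EuclideanSpace ℝ (Fin d) → ℝ)
    (hp : ∀ θ x, p θ x = Real.exp (⟪θ, x⟫ - F θ))
    (θ₁ θ₂ : EuclideanSpace ℝ (Fin d))
    (h1 : Integrable (fun x => Real.exp ⟪θ₁, x⟫) μ)
    (h2 : Integrable (fun x => Real.exp ⟪θ₂, x⟫) μ)
    (α : ℝ) (hα : α ∈ Set.Ioo (0 : ℝ) 1)
    (g : EuclideanSpace ℝ (Fin d))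
    (hg : HasGradientAt F g ((1 - α) • θ₁ + α • θ₂))
    (hg' : g = ∫ x, p ((1 - α) • θ₁ + α • θ₂) x • x ∂μ)
    (hint : Integrable (fun x => p ((1 - α) • θ₁ + α • θ₂) x • x) μ)
    (hKL₁ : Integrable
      (fun x => p ((1 - α) • θ₁ + α • θ₂) x
        * Real.log (p ((1 - α) • θ₁ + α • θ₂) x / p θ₁ x)) μ)
    (hKL₂ : Integrable
      (fun x => p ((1 - α) • θ₁ + α • θ₂) x
        * Real.log (p ((1 - α) • θ₁ + α • θ₂) x / p θ₂ x)) μ) :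
    (1 - α) * ∫ x, p ((1 - α) • θ₁ + α • θ₂) x
        * Real.log (p ((1 - α) • θ₁ + α • θ₂) x / p θ₁ x) ∂μ
      + α * ∫ x, p ((1 - α) • θ₁ + α • θ₂) x
        * Real.log (p ((1 - α) • θ₁ + α • θ₂) x / p θ₂ x) ∂μ
    = (1 - α) * F θ₁ + α * F θ₂ - F ((1 - α) • θ₁ + α • θ₂) := by
  obtain ⟨hα0, hα1⟩ := hα
  set tbar : EuclideanSpace ℝ (Fin d) := (1 - α) • θ₁ + α • θ₂ with htbar
  -- trivial case μ = 0
  rcases eq_or_ne μ 0 with hμ | hμ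
  · subst hμ
    simp only [integral_zero_measure, mul_zero, add_zero] at *
    rw [hF θ₁, hF θ₂, hF tbar]
    simp
  haveI : NeZero μ := ⟨hμ⟩
  -- integrability of exp ⟪tbar, x⟫
  have hinner : ∀ x, ⟪tbar, x⟫ = (1 - α) * ⟪θ₁, x⟫ + α * ⟪θ₂, x⟫ := by
    intro x
    rw [htbar, inner_add_left, real_inner_smul_left, real_inner_smul_left]
  have hZint : Integrable (fun x => Real.exp ⟪tbar, x⟫) μ := by
    refine Integrable.mono' ((h1.const_mul (1 - α)).add (h2.const_mul α)) ?_ ?_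
    · apply Continuous.aestronglyMeasurable
      exact Real.continuous_exp.comp (continuous_const.inner continuous_id)
    · filter_upwards with x
      rw [Real.norm_of_nonneg (Real.exp_pos _).le, hinner x, Real.exp_add,
        mul_comm (1 - α), mul_comm α, Real.exp_mul, Real.exp_mul]
      exact Real.geom_mean_le_arith_mean2_weighted (by linarith) hα0.le
        (Real.exp_pos _).le (Real.exp_pos _).le (by ring)
  have hZpos : 0 < ∫ x, Real.exp ⟪tbar, x⟫ ∂μ := integral_exp_pos hZint
  -- p tbar as a multiple of exp ⟪tbar, ·⟫
  have hptbar : ∀ x, p tbar x = Real.exp (-F tbar) * Real.exp ⟪tbar, x⟫ := by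
    intro x; rw [hp, sub_eq_neg_add, Real.exp_add]
  have hpint : Integrable (fun x => p tbar x) μ := by
    refine (hZint.const_mul (Real.exp (-F tbar))).congr ?_
    filter_upwards with x
    rw [hptbar x]
  have hI : ∫ x, p tbar x ∂μ = 1 := by
    have : ∫ x, p tbar x ∂μ = Real.exp (-F tbar) * ∫ x, Real.exp ⟪tbar, x⟫ ∂μ := by
      rw [← integral_const_mul]
      exact integral_congr_ae (Filter.Eventually.of_forall fun x => hptbar x)
    rw [this, hF tbar, Real.exp_neg, Real.exp_log hZpos,
      inv_mul_cancel₀ hZpos.ne']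
  -- the key per-θ computation
  have key : ∀ θ : EuclideanSpace ℝ (Fin d),
      Integrable (fun x => p tbar x * Real.log (p tbar x / p θ x)) μ →
      ∫ x, p tbar x * Real.log (p tbar x / p θ x) ∂μ
        = ⟪tbar - θ, ∫ x, p tbar x • x ∂μ⟫ + (F θ - F tbar) := by
    intro θ hKL
    have hlog : ∀ x, p tbar x * Real.log (p tbar x / p θ x)
        = ⟪tbar - θ, p tbar x • x⟫ + (F θ - F tbar) * p tbar x := by
      intro x
      rw [hp, hp, ← Real.exp_sub, Real.log_exp, real_inner_smul_right,
        inner_sub_left]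
      ring
    have hint1 : Integrable (fun x => ⟪tbar - θ, p tbar x • x⟫) μ := by
      exact (innerSL ℝ (tbar - θ)).integrable_comp hint
    calc ∫ x, p tbar x * Real.log (p tbar x / p θ x) ∂μ
        = ∫ x, (⟪tbar - θ, p tbar x • x⟫ + (F θ - F tbar) * p tbar x) ∂μ :=
          integral_congr_ae (Filter.Eventually.of_forall fun x => hlog x)
      _ = (∫ x, ⟪tbar - θ, p tbar x • x⟫ ∂μ) + ∫ x, (F θ - F tbar) * p tbar x ∂μ :=
          integral_add hint1 (hpint.const_mul _)
      _ = ⟪tbar - θ, ∫ x, p tbar x • x ∂μ⟫ + (F θ - F tbar) * ∫ x, p tbar x ∂μ := by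
          rw [integral_inner hint, integral_const_mul]
      _ = ⟪tbar - θ, ∫ x, p tbar x • x ∂μ⟫ + (F θ - F tbar) := by rw [hI, mul_one]
  rw [key θ₁ hKL₁, key θ₂ hKL₂]
  set G : EuclideanSpace ℝ (Fin d) := ∫ x, p tbar x • x ∂μ
  have hcomb : (1 - α) * ⟪tbar - θ₁, G⟫ + α * ⟪tbar - θ₂, G⟫ = 0 := by
    rw [← real_inner_smul_left, ← real_inner_smul_left, ← inner_add_left]
    have : (1 - α) • (tbar - θ₁) + α • (tbar - θ₂) = 0 := by
      rw [htbar]; module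
    rw [this, inner_zero_left]
  have : (1 - α) * (⟪tbar - θ₁, G⟫ + (F θ₁ - F tbar)) + α * (⟪tbar - θ₂, G⟫ + (F θ₂ - F tbar))
      = ((1 - α) * ⟪tbar - θ₁, G⟫ + α * ⟪tbar - θ₂, G⟫)
        + ((1 - α) * F θ₁ + α * F θ₂ - F tbar) := by ring
  rw [this, hcomb, zero_add]
end

section
/- Let θ₁, θ₂ ∈ Θ and α ∈ (0,1). Then the α-skew Bhattacharyya distance between p_{θ₁} and p_{θ₂} equals the α-skew Jensen divergence between the natural parameters: B_α(p_{θ₁} : p_{θ₂}) = −log ∫ p_{θ₁}(x)^{1−α} p_{θ₂}(x)^{α} dμ(x) = J_F^α(θ₁:θ₂). -/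
open MeasureTheory Real
open scoped RealInnerProductSpace

/-!
Since `p_θ(x) = exp (⟪θ, x⟫ - F θ)` and the inner product is linear in `θ`, the geometric mixture
`p_{θ₁}^{1-α} p_{θ₂}^α` is `exp (-((1-α) F θ₁ + α F θ₂))` times the unnormalised density
`exp ⟪(1-α) θ₁ + α θ₂, ·⟫`, whose integral is `exp (F ((1-α) θ₁ + α θ₂))`; taking `-log` gives the
Jensen divergence. That integral is finite by convexity of `exp`, and positive unless `μ = 0`, in
which case both sides vanish because `log 0 = 0`.
-/

lemma Real.exp_rpow_mul_exp_rpow (u v a b : ℝ) :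
    exp u ^ a * exp v ^ b = exp (a * u + b * v) := by
  rw [← exp_mul, ← exp_mul, ← exp_add, mul_comm u, mul_comm v]

lemma MeasureTheory.Integrable.exp_convexCombination {X : Type*} [MeasurableSpace X]
    {μ : Measure X} {f g : X → ℝ} (hf : Integrable (fun x => exp (f x)) μ)
    (hg : Integrable (fun x => exp (g x)) μ) {a b : ℝ} (ha : 0 ≤ a) (hb : 0 ≤ b)
    (hab : a + b = 1) :
    Integrable (fun x => exp (a * f x + b * g x)) μ := by
  have hmeas : AEStronglyMeasurable (fun x => exp (a * f x + b * g x)) μ := by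
    simp_rw [← Real.exp_rpow_mul_exp_rpow]
    exact ((hf.aemeasurable.pow_const a).mul (hg.aemeasurable.pow_const b)).aestronglyMeasurable
  refine ((hf.const_mul a).add (hg.const_mul b)).mono' hmeas (.of_forall fun x => ?_)
  rw [norm_of_nonneg (exp_pos _).le]
  exact convexOn_exp.2 (Set.mem_univ _) (Set.mem_univ _) ha hb hab

section ExponentialFamily

variable {E : Type*} [NormedAddCommGroup E] [InnerProductSpace ℝ E]

lemma inner_convexCombination_left (θ₁ θ₂ x : E) (a b : ℝ) :
    ⟪a • θ₁ + b • θ₂, x⟫ = a * ⟪θ₁, x⟫ + b * ⟪θ₂, x⟫ := by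
  rw [inner_add_left, real_inner_smul_left, real_inner_smul_left]

variable [MeasurableSpace E]

lemma integral_rpow_mul_rpow_of_expFamily (μ : Measure E) (F : E → ℝ) (p : E → E → ℝ)
    (hp : ∀ θ x, p θ x = exp (⟪θ, x⟫ - F θ)) (θ₁ θ₂ : E) (α : ℝ) :
    ∫ x, p θ₁ x ^ (1 - α) * p θ₂ x ^ α ∂μ
      = exp (-((1 - α) * F θ₁ + α * F θ₂)) * ∫ x, exp ⟪(1 - α) • θ₁ + α • θ₂, x⟫ ∂μ := by
  rw [← integral_const_mul]
  congr 1 with x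
  rw [hp, hp, Real.exp_rpow_mul_exp_rpow, inner_convexCombination_left, ← exp_add]
  ring_nf

end ExponentialFamily

theorem Bhattacharyya_eq_Jensen_divergence_exponential_family_general
    (d : ℕ) (μ : Measure (EuclideanSpace ℝ (Fin d)))
    (F : EuclideanSpace ℝ (Fin d) → ℝ)
    (hF : ∀ θ, F θ = Real.log (∫ x, Real.exp ⟪θ, x⟫ ∂μ))
    (p : EuclideanSpace ℝ (Fin d) → EuclideanSpace ℝ (Fin d) → ℝ)
    (hp : ∀ θ x, p θ x = Real.exp (⟪θ, x⟫ - F θ))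
    (θ₁ θ₂ : EuclideanSpace ℝ (Fin d))
    (h1 : Integrable (fun x => Real.exp ⟪θ₁, x⟫) μ)
    (h2 : Integrable (fun x => Real.exp ⟪θ₂, x⟫) μ)
    (α : ℝ) (hα : α ∈ Set.Ioo (0 : ℝ) 1) :
    -Real.log (∫ x, p θ₁ x ^ (1 - α) * p θ₂ x ^ α ∂μ)
      = (1 - α) * F θ₁ + α * F θ₂ - F ((1 - α) • θ₁ + α • θ₂) := by
  obtain ⟨hα0, hα1⟩ := hα
  rw [integral_rpow_mul_rpow_of_expFamily μ F p hp]
  rcases eq_zero_or_neZero μ with rfl | _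
  · simp [hF]
  have hint : Integrable (fun x => exp ⟪(1 - α) • θ₁ + α • θ₂, x⟫) μ := by
    simp_rw [inner_convexCombination_left]
    exact h1.exp_convexCombination h2 (by linarith) hα0.le (by ring)
  rw [Real.log_mul (exp_ne_zero _) (integral_exp_pos hint).ne', log_exp, ← hF]
  ring

/-- The α-skew Bhattacharyya distance between two members of the same
exponential family equals the α-skew Jensen divergence of the cumulant function:
`−log ∫ p_{θ₁}^{1−α} p_{θ₂}^{α} dμ = (1−α)F(θ₁) + αF(θ₂) − F((1−α)θ₁ + αθ₂)`. -/
theorem Bhattacharyya_eq_Jensen_divergence_exponential_family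
    (d : ℕ) (μ : Measure (EuclideanSpace ℝ (Fin d))) [SigmaFinite μ]
    (F : EuclideanSpace ℝ (Fin d) → ℝ)
    (hF : ∀ θ, F θ = Real.log (∫ x, Real.exp ⟪θ, x⟫ ∂μ))
    (p : EuclideanSpace ℝ (Fin d) → EuclideanSpace ℝ (Fin d) → ℝ)
    (hp : ∀ θ x, p θ x = Real.exp (⟪θ, x⟫ - F θ))
    (θ₁ θ₂ : EuclideanSpace ℝ (Fin d))
    (h1 : Integrable (fun x => Real.exp ⟪θ₁, x⟫) μ)
    (h2 : Integrable (fun x => Real.exp ⟪θ₂, x⟫) μ)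
    (α : ℝ) (hα : α ∈ Set.Ioo (0 : ℝ) 1) :
    -Real.log (∫ x, p θ₁ x ^ (1 - α) * p θ₂ x ^ α ∂μ)
      = (1 - α) * F θ₁ + α * F θ₂ - F ((1 - α) • θ₁ + α • θ₂) :=
  Bhattacharyya_eq_Jensen_divergence_exponential_family_general d μ F hF p hp θ₁ θ₂ h1 h2 α hα
end

section
/- Let p and q be μ-almost everywhere positive probability densities with respect to μ, let α ∈ (0,1), assume Z = ∫ p^{1−α} q^{α} dμ ∈ (0, ∞), and let (pq)_α^G = p^{1−α} q^{α} / Z be the normalized geometric mixture. If the divergences KL((pq)_α^G : p) and KL((pq)_α^G : q) are finite, then the α-skew geometric Jensen–Shannon symmetrization of the reverse Kullback–Leibler divergence equals the α-skew Bhattacharyya distance: (1−α)·KL((pq)_α^G : p) + α·KL((pq)_α^G : q) = −log Z = B_α(p:q). -/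
open MeasureTheory Real

/-- The α-skew geometric Jensen–Shannon symmetrization of the reverse
Kullback–Leibler divergence equals the α-skew Bhattacharyya distance:
`(1−α)·KL((pq)_α^G : p) + α·KL((pq)_α^G : q) = −log Z` where
`(pq)_α^G = p^{1−α} q^{α} / Z` and `Z = ∫ p^{1−α} q^{α} dμ`. -/
theorem G_JS_reverse_KL_eq_Bhattacharyya
    {X : Type*} [MeasurableSpace X] (μ : Measure X)
    (p q : X → ℝ) (hpm : Measurable p) (hqm : Measurable q)
    (hp0 : ∀ᵐ x ∂μ, 0 < p x) (hq0 : ∀ᵐ x ∂μ, 0 < q x)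
    (hp1 : ∫ x, p x ∂μ = 1) (hq1 : ∫ x, q x ∂μ = 1)
    (α : ℝ) (hα : α ∈ Set.Ioo (0 : ℝ) 1)
    (Z : ℝ) (hZ : Z = ∫ x, p x ^ (1 - α) * q x ^ α ∂μ)
    (hZint : Integrable (fun x => p x ^ (1 - α) * q x ^ α) μ)
    (hZpos : 0 < Z)
    (hKL₁ : Integrable (fun x => (p x ^ (1 - α) * q x ^ α / Z)
      * Real.log ((p x ^ (1 - α) * q x ^ α / Z) / p x)) μ)
    (hKL₂ : Integrable (fun x => (p x ^ (1 - α) * q x ^ α / Z)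
      * Real.log ((p x ^ (1 - α) * q x ^ α / Z) / q x)) μ) :
    (1 - α) * ∫ x, (p x ^ (1 - α) * q x ^ α / Z)
        * Real.log ((p x ^ (1 - α) * q x ^ α / Z) / p x) ∂μ
      + α * ∫ x, (p x ^ (1 - α) * q x ^ α / Z)
        * Real.log ((p x ^ (1 - α) * q x ^ α / Z) / q x) ∂μ
    = -Real.log Z := by
  have hZne : Z ≠ 0 := ne_of_gt hZpos
  have key : (1 - α) * ∫ x, (p x ^ (1 - α) * q x ^ α / Z)
        * Real.log ((p x ^ (1 - α) * q x ^ α / Z) / p x) ∂μ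
      + α * ∫ x, (p x ^ (1 - α) * q x ^ α / Z)
        * Real.log ((p x ^ (1 - α) * q x ^ α / Z) / q x) ∂μ
    = ∫ x, ((1 - α) * ((p x ^ (1 - α) * q x ^ α / Z)
        * Real.log ((p x ^ (1 - α) * q x ^ α / Z) / p x))
      + α * ((p x ^ (1 - α) * q x ^ α / Z)
        * Real.log ((p x ^ (1 - α) * q x ^ α / Z) / q x))) ∂μ := by
    rw [integral_add (hKL₁.const_mul _) (hKL₂.const_mul _),
      integral_const_mul, integral_const_mul]
  rw [key]
  have hcongr : ∫ x, ((1 - α) * ((p x ^ (1 - α) * q x ^ α / Z)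
        * Real.log ((p x ^ (1 - α) * q x ^ α / Z) / p x))
      + α * ((p x ^ (1 - α) * q x ^ α / Z)
        * Real.log ((p x ^ (1 - α) * q x ^ α / Z) / q x))) ∂μ
      = ∫ x, (-Real.log Z) * (p x ^ (1 - α) * q x ^ α / Z) ∂μ := by
    refine integral_congr_ae ?_
    filter_upwards [hp0, hq0] with x hpx hqx
    have ha : (0:ℝ) < p x ^ (1 - α) := Real.rpow_pos_of_pos hpx _
    have hb : (0:ℝ) < q x ^ α := Real.rpow_pos_of_pos hqx _
    have hg : (0:ℝ) < p x ^ (1 - α) * q x ^ α / Z := by positivity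
    have hlog : Real.log (p x ^ (1 - α) * q x ^ α / Z)
        = (1 - α) * Real.log (p x) + α * Real.log (q x) - Real.log Z := by
      rw [Real.log_div (by positivity) hZne, Real.log_mul ha.ne' hb.ne',
        Real.log_rpow hpx, Real.log_rpow hqx]
    rw [Real.log_div hg.ne' hpx.ne', Real.log_div hg.ne' hqx.ne', hlog]
    ring
  rw [hcongr, integral_const_mul]
  have : ∫ x, p x ^ (1 - α) * q x ^ α / Z ∂μ = 1 := by
    rw [integral_div, ← hZ, div_self hZne]
  rw [this, mul_one]
end

section
/- Let p and q be μ-almost everywhere positive probability densities with respect to μ that are not μ-almost everywhere equal. Then for every λ ∈ [0,1], 0 < ∫ p^{1−λ} q^{λ} dμ ≤ 1, the α-skew Bhattacharyya distance B_λ(p:q) = −log ∫ p^{1−λ} q^{λ} dμ is a strictly concave continuous function of λ on [0,1] with B_0(p:q) = B_1(p:q) = 0, and hence there exists a unique α* ∈ (0,1) maximizing λ ↦ B_λ(p:q); moreover B_λ(p:q) > 0 for all λ ∈ (0,1). -/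
open MeasureTheory Real

private lemma strict_amgm {a b s t : ℝ} (ha : 0 < a) (hb : 0 < b) (hab : a ≠ b)
    (hs : 0 < s) (ht : 0 < t) (hst : s + t = 1) : a ^ s * b ^ t < s * a + t * b := by
  have hlog : Real.log a ≠ Real.log b := fun h =>
    hab (Real.log_injOn_pos (Set.mem_Ioi.2 ha) (Set.mem_Ioi.2 hb) h)
  have key := strictConvexOn_exp.2 (Set.mem_univ (Real.log a)) (Set.mem_univ (Real.log b))
    hlog hs ht hst
  simp only [smul_eq_mul, Real.exp_log ha, Real.exp_log hb] at key
  calc a ^ s * b ^ t = Real.exp (s * Real.log a + t * Real.log b) := by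
        rw [Real.exp_add, Real.rpow_def_of_pos ha, Real.rpow_def_of_pos hb, mul_comm (Real.log a),
          mul_comm (Real.log b)]
    _ < s * a + t * b := key

private lemma integ_pow {X : Type*} [MeasurableSpace X] {μ : Measure X} {g h : X → ℝ}
    (hgm : Measurable g) (hhm : Measurable h) (hg0 : ∀ᵐ x ∂μ, 0 < g x)
    (hh0 : ∀ᵐ x ∂μ, 0 < h x) (hgi : Integrable g μ) (hhi : Integrable h μ)
    {s t : ℝ} (hs : 0 ≤ s) (ht : 0 ≤ t) (hst : s + t = 1) :
    Integrable (fun x => g x ^ s * h x ^ t) μ := by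
  refine Integrable.mono' ((hgi.const_mul s).add (hhi.const_mul t)) ?_ ?_
  · exact Measurable.aestronglyMeasurable (by fun_prop)
  · filter_upwards [hg0, hh0] with x hgx hhx
    rw [Real.norm_eq_abs, abs_of_nonneg (by positivity)]
    exact Real.geom_mean_le_arith_mean2_weighted hs ht hgx.le hhx.le hst

private lemma key_lt {X : Type*} [MeasurableSpace X] {μ : Measure X} {g h : X → ℝ}
    (hgm : Measurable g) (hhm : Measurable h) (hg0 : ∀ᵐ x ∂μ, 0 < g x)
    (hh0 : ∀ᵐ x ∂μ, 0 < h x) (hgi : Integrable g μ) (hhi : Integrable h μ)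
    (hg1 : ∫ x, g x ∂μ = 1) (hh1 : ∫ x, h x ∂μ = 1) (hne : ¬ g =ᵐ[μ] h)
    {s t : ℝ} (hs : 0 < s) (ht : 0 < t) (hst : s + t = 1) :
    ∫ x, g x ^ s * h x ^ t ∂μ < 1 := by
  have hφi : Integrable (fun x => g x ^ s * h x ^ t) μ :=
    integ_pow hgm hhm hg0 hh0 hgi hhi hs.le ht.le hst
  have hsum : Integrable (fun x => s * g x + t * h x) μ :=
    (hgi.const_mul s).add (hhi.const_mul t)
  have hdi : Integrable (fun x => (s * g x + t * h x) - g x ^ s * h x ^ t) μ := hsum.sub hφi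
  have hd0 : 0 ≤ᵐ[μ] fun x => (s * g x + t * h x) - g x ^ s * h x ^ t := by
    filter_upwards [hg0, hh0] with x hgx hhx
    have := Real.geom_mean_le_arith_mean2_weighted hs.le ht.le hgx.le hhx.le hst
    simp only [Pi.zero_apply]; linarith
  have hpos : 0 < ∫ x, (s * g x + t * h x) - g x ^ s * h x ^ t ∂μ := by
    rw [integral_pos_iff_support_of_nonneg_ae hd0 hdi, pos_iff_ne_zero]
    intro heq
    have hz : ∀ᵐ x ∂μ, (s * g x + t * h x) - g x ^ s * h x ^ t = 0 := by
      rw [ae_iff]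
      exact heq
    apply hne
    filter_upwards [hg0, hh0, hz] with x hgx hhx hzx
    by_contra hne'
    have := strict_amgm hgx hhx hne' hs ht hst
    linarith
  have hint : ∫ x, (s * g x + t * h x) - g x ^ s * h x ^ t ∂μ
      = (s * 1 + t * 1) - ∫ x, g x ^ s * h x ^ t ∂μ := by
    rw [integral_sub hsum hφi, integral_add (hgi.const_mul s) (hhi.const_mul t),
      integral_const_mul, integral_const_mul, hg1, hh1]
  rw [hint] at hpos
  linarith

set_option maxHeartbeats 1000000 in
/-- For a.e. positive probability densities `p ≠ q` (not a.e. equal),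
`0 < ∫ p^{1−λ} q^{λ} dμ ≤ 1` for all `λ ∈ [0,1]`, the skew Bhattacharyya distance
`B_λ = −log ∫ p^{1−λ} q^{λ} dμ` is strictly concave and continuous on `[0,1]` with
`B_0 = B_1 = 0`, there is a unique maximizer `α* ∈ (0,1)`, and `B_λ > 0` on `(0,1)`. -/
theorem Bhattacharyya_strictly_concave_unique_maximizer
    {X : Type*} [MeasurableSpace X] (μ : Measure X)
    (p q : X → ℝ) (hpm : Measurable p) (hqm : Measurable q)
    (hp0 : ∀ᵐ x ∂μ, 0 < p x) (hq0 : ∀ᵐ x ∂μ, 0 < q x)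
    (hp1 : ∫ x, p x ∂μ = 1) (hq1 : ∫ x, q x ∂μ = 1)
    (hne : ¬ p =ᵐ[μ] q)
    (B : ℝ → ℝ)
    (hB : ∀ l, B l = -Real.log (∫ x, p x ^ (1 - l) * q x ^ l ∂μ)) :
    (∀ l ∈ Set.Icc (0 : ℝ) 1,
      0 < ∫ x, p x ^ (1 - l) * q x ^ l ∂μ ∧ ∫ x, p x ^ (1 - l) * q x ^ l ∂μ ≤ 1) ∧
    StrictConcaveOn ℝ (Set.Icc (0 : ℝ) 1) B ∧
    ContinuousOn B (Set.Icc (0 : ℝ) 1) ∧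
    B 0 = 0 ∧ B 1 = 0 ∧
    (∃! a : ℝ, a ∈ Set.Ioo (0 : ℝ) 1 ∧ ∀ l ∈ Set.Icc (0 : ℝ) 1, B l ≤ B a) ∧
    (∀ l ∈ Set.Ioo (0 : ℝ) 1, 0 < B l) := by
  set f : ℝ → ℝ := fun l => ∫ x, p x ^ (1 - l) * q x ^ l ∂μ with hf
  have hμ : μ ≠ 0 := by
    intro h; rw [h] at hp1; simp at hp1
  have hpi : Integrable p μ := by
    by_contra h; rw [integral_undef h] at hp1; norm_num at hp1
  have hqi : Integrable q μ := by
    by_contra h; rw [integral_undef h] at hq1; norm_num at hq1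
  have hfi : ∀ l ∈ Set.Icc (0 : ℝ) 1, Integrable (fun x => p x ^ (1 - l) * q x ^ l) μ := by
    intro l hl
    exact integ_pow hpm hqm hp0 hq0 hpi hqi (by linarith [hl.2]) hl.1 (by ring)
  have hfpos : ∀ l ∈ Set.Icc (0 : ℝ) 1, 0 < f l := by
    intro l hl
    show (0:ℝ) < ∫ x, p x ^ (1 - l) * q x ^ l ∂μ
    rw [integral_pos_iff_support_of_nonneg_ae ?_ (hfi l hl), pos_iff_ne_zero]
    · intro heq
      have hz : ∀ᵐ x ∂μ, p x ^ (1 - l) * q x ^ l = 0 := by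
        rw [ae_iff]; exact heq
      have hFalse : ∀ᵐ _x ∂μ, False := by
        filter_upwards [hp0, hq0, hz] with x hpx hqx hzx
        have : 0 < p x ^ (1 - l) * q x ^ l := by positivity
        linarith
      rw [ae_iff] at hFalse
      simp only [not_false_eq_true, Set.setOf_true] at hFalse
      exact hμ (Measure.measure_univ_eq_zero.mp hFalse)
    · filter_upwards [hp0, hq0] with x hpx hqx
      simp only [Pi.zero_apply]; positivity
  have hf0 : f 0 = 1 := by
    show (∫ x, p x ^ (1 - (0:ℝ)) * q x ^ (0:ℝ) ∂μ) = 1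
    simp only [sub_zero, Real.rpow_one, Real.rpow_zero, mul_one]; exact hp1
  have hf1 : f 1 = 1 := by
    show (∫ x, p x ^ (1 - (1:ℝ)) * q x ^ (1:ℝ) ∂μ) = 1
    simp only [sub_self, Real.rpow_zero, Real.rpow_one, one_mul]; exact hq1
  have hflt : ∀ l ∈ Set.Ioo (0 : ℝ) 1, f l < 1 := by
    intro l hl
    exact key_lt hpm hqm hp0 hq0 hpi hqi hp1 hq1 hne (by linarith [hl.2]) hl.1 (by ring)
  have hfle : ∀ l ∈ Set.Icc (0 : ℝ) 1, f l ≤ 1 := by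
    intro l hl
    rcases eq_or_lt_of_le hl.1 with h0 | h0
    · rw [← h0, hf0]
    rcases eq_or_lt_of_le hl.2 with h1 | h1
    · rw [h1, hf1]
    · exact (hflt l ⟨h0, h1⟩).le
  -- strict concavity
  have hSC : StrictConcaveOn ℝ (Set.Icc (0 : ℝ) 1) B := by
    refine ⟨convex_Icc 0 1, fun x hx y hy hxy a b ha hb hab => ?_⟩
    simp only [smul_eq_mul]
    have hz : a * x + b * y ∈ Set.Icc (0 : ℝ) 1 :=
      Set.mem_Icc.mpr ⟨by nlinarith [hx.1, hy.1, ha.le, hb.le],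
        by nlinarith [hx.2, hy.2, ha.le, hb.le]⟩
    have hfx := hfpos x hx
    have hfy := hfpos y hy
    have hfz := hfpos _ hz
    set g : X → ℝ := fun x' => (p x' ^ (1 - x) * q x' ^ x) / f x with hgdef
    set h : X → ℝ := fun x' => (p x' ^ (1 - y) * q x' ^ y) / f y with hhdef
    have hgm : Measurable g := by fun_prop
    have hhm : Measurable h := by fun_prop
    have hg0 : ∀ᵐ x' ∂μ, 0 < g x' := by
      filter_upwards [hp0, hq0] with x' hpx hqx; exact div_pos (by positivity) hfx
    have hh0 : ∀ᵐ x' ∂μ, 0 < h x' := by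
      filter_upwards [hp0, hq0] with x' hpx hqx; exact div_pos (by positivity) hfy
    have hgi : Integrable g μ := (hfi x hx).div_const _
    have hhi : Integrable h μ := (hfi y hy).div_const _
    have hg1 : ∫ x', g x' ∂μ = 1 := by
      rw [hgdef]; simp only [integral_div]; exact div_self hfx.ne'
    have hh1 : ∫ x', h x' ∂μ = 1 := by
      rw [hhdef]; simp only [integral_div]; exact div_self hfy.ne'
    have hghne : ¬ g =ᵐ[μ] h := by
      intro heq
      apply hne
      set C : ℝ := Real.exp ((Real.log (f x) - Real.log (f y)) / (x - y)) with hC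
      have hqp : ∀ᵐ x' ∂μ, q x' = C * p x' := by
        filter_upwards [hp0, hq0, heq] with x' hpx hqx he
        simp only [hgdef, hhdef] at he
        have hlog := congrArg Real.log he
        rw [Real.log_div (by positivity) hfx.ne', Real.log_div (by positivity) hfy.ne',
          Real.log_mul (by positivity) (by positivity),
          Real.log_mul (by positivity) (by positivity),
          Real.log_rpow hpx, Real.log_rpow hqx, Real.log_rpow hpx, Real.log_rpow hqx] at hlog
        have hd : x - y ≠ 0 := sub_ne_zero.mpr hxy
        have hlq0 : Real.log (q x') - Real.log (p x') =
            (Real.log (f x) - Real.log (f y)) / (x - y) := by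
          rw [eq_div_iff hd]
          linear_combination hlog
        have hlq : Real.log (q x') = Real.log (p x') +
            (Real.log (f x) - Real.log (f y)) / (x - y) := by linarith
        calc q x' = Real.exp (Real.log (q x')) := (Real.exp_log hqx).symm
          _ = C * p x' := by rw [hlq, Real.exp_add, hC, Real.exp_log hpx, mul_comm]
      have hC1 : C = 1 := by
        have h2 : ∫ x', q x' ∂μ = ∫ x', C * p x' ∂μ := integral_congr_ae hqp
        rw [hq1, integral_const_mul, hp1, mul_one] at h2
        exact h2.symm
      filter_upwards [hqp] with x' hx'
      rw [hx', hC1, one_mul]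
    have hkey := key_lt hgm hhm hg0 hh0 hgi hhi hg1 hh1 hghne ha hb hab
    have hcongr : ∀ᵐ x' ∂μ, p x' ^ (1 - (a * x + b * y)) * q x' ^ (a * x + b * y)
        = (f x ^ a * f y ^ b) * (g x' ^ a * h x' ^ b) := by
      filter_upwards [hp0, hq0] with x' hpx hqx
      have hgp : 0 < g x' := div_pos (by positivity) hfx
      have hhp : 0 < h x' := div_pos (by positivity) hfy
      have hL : (0:ℝ) < p x' ^ (1 - (a * x + b * y)) * q x' ^ (a * x + b * y) := by positivity
      have hR : (0:ℝ) < (f x ^ a * f y ^ b) * (g x' ^ a * h x' ^ b) :=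
        mul_pos (mul_pos (Real.rpow_pos_of_pos hfx a) (Real.rpow_pos_of_pos hfy b))
          (mul_pos (Real.rpow_pos_of_pos hgp a) (Real.rpow_pos_of_pos hhp b))
      refine Real.log_injOn_pos (Set.mem_Ioi.2 hL) (Set.mem_Ioi.2 hR) ?_
      have hlg : Real.log (g x') =
          (1 - x) * Real.log (p x') + x * Real.log (q x') - Real.log (f x) := by
        show Real.log (p x' ^ (1 - x) * q x' ^ x / f x) = _
        rw [Real.log_div (by positivity) hfx.ne',
          Real.log_mul (by positivity) (by positivity), Real.log_rpow hpx, Real.log_rpow hqx]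
      have hlh : Real.log (h x') =
          (1 - y) * Real.log (p x') + y * Real.log (q x') - Real.log (f y) := by
        show Real.log (p x' ^ (1 - y) * q x' ^ y / f y) = _
        rw [Real.log_div (by positivity) hfy.ne',
          Real.log_mul (by positivity) (by positivity), Real.log_rpow hpx, Real.log_rpow hqx]
      have e1 : Real.log (p x' ^ (1 - (a * x + b * y)) * q x' ^ (a * x + b * y))
          = (1 - (a * x + b * y)) * Real.log (p x')
            + (a * x + b * y) * Real.log (q x') := by
        rw [Real.log_mul (by positivity) (by positivity), Real.log_rpow hpx, Real.log_rpow hqx]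
      have e2 : Real.log ((f x ^ a * f y ^ b) * (g x' ^ a * h x' ^ b))
          = a * Real.log (f x) + b * Real.log (f y)
            + (a * Real.log (g x') + b * Real.log (h x')) := by
        rw [Real.log_mul
            (mul_pos (Real.rpow_pos_of_pos hfx a) (Real.rpow_pos_of_pos hfy b)).ne'
            (mul_pos (Real.rpow_pos_of_pos hgp a) (Real.rpow_pos_of_pos hhp b)).ne',
          Real.log_mul (Real.rpow_pos_of_pos hfx a).ne' (Real.rpow_pos_of_pos hfy b).ne',
          Real.log_mul (Real.rpow_pos_of_pos hgp a).ne' (Real.rpow_pos_of_pos hhp b).ne',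
          Real.log_rpow hfx, Real.log_rpow hfy, Real.log_rpow hgp, Real.log_rpow hhp]
      rw [e1, e2, hlg, hlh]
      linear_combination (-Real.log (p x')) * hab
    have hfeq : f (a * x + b * y) = (f x ^ a * f y ^ b) * ∫ x', g x' ^ a * h x' ^ b ∂μ := by
      have h2 := integral_congr_ae hcongr
      rw [integral_const_mul] at h2
      exact h2
    have hflt2 : f (a * x + b * y) < f x ^ a * f y ^ b := by
      rw [hfeq]
      calc (f x ^ a * f y ^ b) * ∫ x', g x' ^ a * h x' ^ b ∂μ
          < (f x ^ a * f y ^ b) * 1 := by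
            exact mul_lt_mul_of_pos_left hkey
              (mul_pos (Real.rpow_pos_of_pos hfx a) (Real.rpow_pos_of_pos hfy b))
        _ = f x ^ a * f y ^ b := mul_one _
    have hloglt : Real.log (f (a * x + b * y)) < a * Real.log (f x) + b * Real.log (f y) := by
      calc Real.log (f (a * x + b * y)) < Real.log (f x ^ a * f y ^ b) :=
            Real.log_lt_log hfz hflt2
        _ = a * Real.log (f x) + b * Real.log (f y) := by
            rw [Real.log_mul (Real.rpow_pos_of_pos hfx a).ne'
              (Real.rpow_pos_of_pos hfy b).ne', Real.log_rpow hfx, Real.log_rpow hfy]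
    have hBx : B x = -Real.log (f x) := hB x
    have hBy : B y = -Real.log (f y) := hB y
    have hBz : B (a * x + b * y) = -Real.log (f (a * x + b * y)) := hB (a * x + b * y)
    rw [hBx, hBy, hBz]
    linarith
  -- continuity
  have hfc : ContinuousOn f (Set.Icc (0 : ℝ) 1) := by
    rw [hf]
    refine continuousOn_of_dominated (bound := fun x => p x + q x) ?_ ?_ (hpi.add hqi) ?_
    · intro l _; exact Measurable.aestronglyMeasurable (by fun_prop)
    · intro l hl
      filter_upwards [hp0, hq0] with x hpx hqx
      rw [Real.norm_eq_abs, abs_of_nonneg (by positivity)]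
      have h1 := Real.geom_mean_le_arith_mean2_weighted (w₁ := 1 - l) (w₂ := l)
        (p₁ := p x) (p₂ := q x) (by linarith [hl.2]) hl.1 hpx.le hqx.le (by ring)
      nlinarith [hl.1, hl.2, hpx.le, hqx.le]
    · filter_upwards [hp0, hq0] with x hpx hqx
      have c1 : Continuous fun l : ℝ => p x ^ (1 - l) :=
        Continuous.comp (continuous_iff_continuousAt.mpr fun _ =>
          Real.continuousAt_const_rpow hpx.ne') (continuous_const.sub continuous_id)
      have c2 : Continuous fun l : ℝ => q x ^ l :=
        continuous_iff_continuousAt.mpr fun _ => Real.continuousAt_const_rpow hqx.ne'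
      exact (c1.mul c2).continuousOn
  have hBc : ContinuousOn B (Set.Icc (0 : ℝ) 1) := by
    have hc : ContinuousOn (fun l => -Real.log (f l)) (Set.Icc (0 : ℝ) 1) :=
      (hfc.log fun l hl => (hfpos l hl).ne').neg
    exact hc.congr fun l _ => hB l
  have hB0 : B 0 = 0 := by
    have h0 : B 0 = -Real.log (f 0) := hB 0
    rw [h0, hf0, Real.log_one, neg_zero]
  have hB1 : B 1 = 0 := by
    have h1 : B 1 = -Real.log (f 1) := hB 1
    rw [h1, hf1, Real.log_one, neg_zero]
  have hBpos : ∀ l ∈ Set.Ioo (0 : ℝ) 1, 0 < B l := by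
    intro l hl
    have hBl : B l = -Real.log (f l) := hB l
    rw [hBl]
    exact neg_pos.mpr (Real.log_neg (hfpos l (Set.Ioo_subset_Icc_self hl)) (hflt l hl))
  -- unique maximizer
  obtain ⟨a, haI, hamax⟩ := isCompact_Icc.exists_isMaxOn (Set.nonempty_Icc.mpr zero_le_one) hBc
  have hhalf : (1/2 : ℝ) ∈ Set.Ioo (0 : ℝ) 1 := by norm_num
  have hBa : 0 < B a :=
    lt_of_lt_of_le (hBpos _ hhalf) (hamax (Set.Ioo_subset_Icc_self hhalf))
  have haIoo : a ∈ Set.Ioo (0 : ℝ) 1 := by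
    refine ⟨haI.1.lt_of_ne fun h0 => ?_, haI.2.lt_of_ne fun h1 => ?_⟩
    · rw [← h0] at hBa; rw [hB0] at hBa; exact lt_irrefl _ hBa
    · rw [h1] at hBa; rw [hB1] at hBa; exact lt_irrefl _ hBa
  have huniq : ∃! a' : ℝ, a' ∈ Set.Ioo (0 : ℝ) 1 ∧ ∀ l ∈ Set.Icc (0 : ℝ) 1, B l ≤ B a' := by
    refine ⟨a, ⟨haIoo, fun l hl => hamax hl⟩, ?_⟩
    rintro b ⟨hbIoo, hbmax⟩
    by_contra hba
    have hEq : B b = B a :=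
      le_antisymm (hamax (Set.Ioo_subset_Icc_self hbIoo))
        (hbmax a (Set.Ioo_subset_Icc_self haIoo))
    have hm := hSC.2 (Set.Ioo_subset_Icc_self hbIoo) (Set.Ioo_subset_Icc_self haIoo) hba
      (by norm_num : (0:ℝ) < 1/2) (by norm_num : (0:ℝ) < 1/2) (by norm_num)
    simp only [smul_eq_mul] at hm
    have hmid : (1/2 : ℝ) * b + (1/2 : ℝ) * a ∈ Set.Icc (0 : ℝ) 1 :=
      Set.mem_Icc.mpr ⟨by nlinarith [hbIoo.1, haIoo.1], by nlinarith [hbIoo.2, haIoo.2]⟩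
    have hle : B (1/2 * b + 1/2 * a) ≤ B a := hamax hmid
    linarith
  exact ⟨fun l hl => ⟨hfpos l hl, hfle l hl⟩, hSC, hBc, hB0, hB1, huniq, hBpos⟩
end

section
/- Let p and q be μ-almost everywhere positive probability densities with respect to μ that are not μ-almost everywhere equal, and for λ ∈ (0,1) let p_λ = p^{1−λ} q^{λ} / Z_λ with Z_λ = ∫ p^{1−λ} q^{λ} dμ be the geometric mixture (the Hellinger/Bhattacharyya arc). Assume that for λ in a neighborhood of the maximizer α* ∈ (0,1) of λ ↦ B_λ(p:q) one has ∫ p^{1−λ} q^{λ} |log(q/p)| dμ < ∞, so that λ ↦ Z_λ is differentiable with derivative ∫ p^{1−λ} q^{λ} log(q/p) dμ, and assume KL(p_{α*} : p) and KL(p_{α*} : q) are finite. Then the maximizer α* satisfies KL(p_{α*} : p) = KL(p_{α*} : q), and this common value is the Chernoff information. -/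
open MeasureTheory Real

/-- At the maximizer `α*` of the skew Bhattacharyya distance
`B_λ = −log Z_λ` (with `Z_λ = ∫ p^{1−λ} q^{λ} dμ`), the geometric mixture
`p_{α*} = p^{1−α*} q^{α*}/Z_{α*}` is equidistant in KL divergence from `p` and `q`,
and this common value is the Chernoff information `B_{α*}`. -/
theorem Chernoff_point_KL_equidistant
    {X : Type*} [MeasurableSpace X] (μ : Measure X)
    (p q : X → ℝ) (hpm : Measurable p) (hqm : Measurable q)
    (hp0 : ∀ᵐ x ∂μ, 0 < p x) (hq0 : ∀ᵐ x ∂μ, 0 < q x)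
    (hp1 : ∫ x, p x ∂μ = 1) (hq1 : ∫ x, q x ∂μ = 1)
    (hne : ¬ p =ᵐ[μ] q)
    (Z : ℝ → ℝ) (hZ : ∀ l, Z l = ∫ x, p x ^ (1 - l) * q x ^ l ∂μ)
    (B : ℝ → ℝ) (hB : ∀ l, B l = -Real.log (Z l))
    (a : ℝ) (ha : a ∈ Set.Ioo (0 : ℝ) 1)
    (hmax : ∀ l ∈ Set.Ioo (0 : ℝ) 1, B l ≤ B a)
    (habs : ∀ᶠ l in nhds a,
      Integrable (fun x => p x ^ (1 - l) * q x ^ l * |Real.log (q x / p x)|) μ)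
    (hderiv : ∀ᶠ l in nhds a,
      HasDerivAt Z (∫ x, p x ^ (1 - l) * q x ^ l * Real.log (q x / p x) ∂μ) l)
    (hKLp : Integrable (fun x => (p x ^ (1 - a) * q x ^ a / Z a)
      * Real.log ((p x ^ (1 - a) * q x ^ a / Z a) / p x)) μ)
    (hKLq : Integrable (fun x => (p x ^ (1 - a) * q x ^ a / Z a)
      * Real.log ((p x ^ (1 - a) * q x ^ a / Z a) / q x)) μ) :
    (∫ x, (p x ^ (1 - a) * q x ^ a / Z a)
        * Real.log ((p x ^ (1 - a) * q x ^ a / Z a) / p x) ∂μ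
      = ∫ x, (p x ^ (1 - a) * q x ^ a / Z a)
        * Real.log ((p x ^ (1 - a) * q x ^ a / Z a) / q x) ∂μ) ∧
    (∫ x, (p x ^ (1 - a) * q x ^ a / Z a)
        * Real.log ((p x ^ (1 - a) * q x ^ a / Z a) / p x) ∂μ = B a) := by
  -- integrability of p and q
  have hpint : Integrable p μ := by
    by_contra h; rw [integral_undef h] at hp1; norm_num at hp1
  have hqint : Integrable q μ := by
    by_contra h; rw [integral_undef h] at hq1; norm_num at hq1
  have hgm : Measurable (fun x => p x ^ (1 - a) * q x ^ a) :=
    by fun_prop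
  have hgpos : ∀ᵐ x ∂μ, 0 < p x ^ (1 - a) * q x ^ a := by
    filter_upwards [hp0, hq0] with x hp hq
    exact mul_pos (rpow_pos_of_pos hp _) (rpow_pos_of_pos hq _)
  have hgint : Integrable (fun x => p x ^ (1 - a) * q x ^ a) μ := by
    refine ((hpint.const_mul (1 - a)).add (hqint.const_mul a)).mono'
      hgm.aestronglyMeasurable ?_
    filter_upwards [hp0, hq0] with x hp hq
    rw [Real.norm_eq_abs,
      abs_of_pos (mul_pos (rpow_pos_of_pos hp _) (rpow_pos_of_pos hq _))]
    exact Real.geom_mean_le_arith_mean2_weighted (by linarith [ha.2]) ha.1.le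
      hp.le hq.le (by ring)
  -- Z a > 0
  have hZpos : 0 < Z a := by
    rw [hZ a, integral_pos_iff_support_of_nonneg_ae
      (by filter_upwards [hgpos] with x h using h.le) hgint]
    have hcompl : μ (Function.support fun x => p x ^ (1 - a) * q x ^ a)ᶜ = 0 := by
      refine measure_mono_null ?_ (ae_iff.mp hgpos)
      intro x hx
      simp only [Function.mem_support, Set.mem_compl_iff, not_not] at hx
      simp [hx]
    rcases eq_or_ne (μ (Function.support fun x => p x ^ (1 - a) * q x ^ a)) 0 with h0 | h0
    · exfalso
      have : μ Set.univ = 0 := by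
        have := measure_union_le (μ := μ)
          (Function.support fun x => p x ^ (1 - a) * q x ^ a)
          (Function.support fun x => p x ^ (1 - a) * q x ^ a)ᶜ
        rw [Set.union_compl_self, h0, hcompl] at this
        simpa using this
      rw [Measure.measure_univ_eq_zero] at this
      rw [this] at hp1
      simp at hp1
    · exact h0.bot_lt
  -- derivative zero at the maximizer
  have hZd : HasDerivAt Z (∫ x, p x ^ (1 - a) * q x ^ a * Real.log (q x / p x) ∂μ) a :=
    hderiv.self_of_nhds
  have hBmax : IsLocalMax B a := by
    filter_upwards [isOpen_Ioo.mem_nhds ha] with l hl using hmax l hl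
  have hBd : HasDerivAt B
      (-((∫ x, p x ^ (1 - a) * q x ^ a * Real.log (q x / p x) ∂μ) / Z a)) a := by
    have h1 := (hZd.log hZpos.ne').neg
    have hBe : B = fun l => -Real.log (Z l) := funext hB
    rw [hBe]; exact h1
  have hD0 : (∫ x, p x ^ (1 - a) * q x ^ a * Real.log (q x / p x) ∂μ) = 0 := by
    have h := hBmax.hasDerivAt_eq_zero hBd
    have := neg_eq_zero.mp h
    exact (div_eq_zero_iff.mp this).resolve_right hZpos.ne'
  -- integrability of g * log(q/p)
  have hglog : Integrable (fun x => p x ^ (1 - a) * q x ^ a * Real.log (q x / p x)) μ := by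
    refine habs.self_of_nhds.mono'
      ((hgm.mul (Real.measurable_log.comp (hqm.div hpm))).aestronglyMeasurable) ?_
    filter_upwards [hgpos] with x h
    rw [Real.norm_eq_abs, abs_mul, abs_of_pos h]
  -- first equality
  have key1 : ∀ᵐ x ∂μ,
      (p x ^ (1 - a) * q x ^ a / Z a) * Real.log ((p x ^ (1 - a) * q x ^ a / Z a) / p x)
        - (p x ^ (1 - a) * q x ^ a / Z a) * Real.log ((p x ^ (1 - a) * q x ^ a / Z a) / q x)
      = (Z a)⁻¹ * (p x ^ (1 - a) * q x ^ a * Real.log (q x / p x)) := by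
    filter_upwards [hp0, hq0, hgpos] with x hp hq hg
    have hA : 0 < p x ^ (1 - a) * q x ^ a / Z a := div_pos hg hZpos
    rw [Real.log_div hA.ne' hp.ne', Real.log_div hA.ne' hq.ne',
      Real.log_div hq.ne' hp.ne']
    ring
  have e1 : (∫ x, (p x ^ (1 - a) * q x ^ a / Z a)
        * Real.log ((p x ^ (1 - a) * q x ^ a / Z a) / p x) ∂μ)
      - (∫ x, (p x ^ (1 - a) * q x ^ a / Z a)
        * Real.log ((p x ^ (1 - a) * q x ^ a / Z a) / q x) ∂μ) = 0 := by
    rw [← integral_sub hKLp hKLq, integral_congr_ae key1, integral_const_mul, hD0, mul_zero]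
  refine ⟨sub_eq_zero.mp e1, ?_⟩
  -- second equality
  have key2 : ∀ᵐ x ∂μ,
      (p x ^ (1 - a) * q x ^ a / Z a) * Real.log ((p x ^ (1 - a) * q x ^ a / Z a) / p x)
      = (a / Z a) * (p x ^ (1 - a) * q x ^ a * Real.log (q x / p x))
        - (Real.log (Z a) / Z a) * (p x ^ (1 - a) * q x ^ a) := by
    filter_upwards [hp0, hq0, hgpos] with x hp hq hg
    have hA : 0 < p x ^ (1 - a) * q x ^ a / Z a := div_pos hg hZpos
    rw [Real.log_div hA.ne' hp.ne', Real.log_div hg.ne' hZpos.ne',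
      Real.log_mul (rpow_pos_of_pos hp _).ne' (rpow_pos_of_pos hq _).ne',
      Real.log_rpow hp, Real.log_rpow hq, Real.log_div hq.ne' hp.ne']
    ring
  rw [integral_congr_ae key2, integral_sub (hglog.const_mul _) (hgint.const_mul _),
    integral_const_mul, integral_const_mul, hD0, mul_zero, ← hZ a, hB a,
    div_mul_cancel₀ _ hZpos.ne']
  ring
end

section
/- For all γ₁, γ₂ > 0, the Kullback–Leibler divergence between the scale Cauchy densities p_{γ₁} and p_{γ₂} is KL(p_{γ₁} : p_{γ₂}) = ∫_ℝ p_{γ₁}(x) log( p_{γ₁}(x) / p_{γ₂}(x) ) dx = 2 log( (γ₁ + γ₂) / (2√(γ₁γ₂)) ). In particular, this divergence is symmetric in γ₁ and γ₂ and is nonnegative since the arithmetic mean of γ₁ and γ₂ dominates their geometric mean. -/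
/-!
Since `p_γ₁ / p_γ₂ = (γ₁ / γ₂) (γ₂² + x²) / (γ₁² + x²)`, everything reduces to the logarithmic
moments `K(a) = ∫ p_γ(x) log (a² + x²) dx`, and `K(a) = 2 log (γ + a)` for `a > 0`. Indeed,
differentiating under the integral sign, `K'(a) = ∫ p_γ(x) 2a / (a² + x²) dx`, which partial
fractions evaluate to `2 / (γ + a)` for `a ≠ γ`; hence `K(a) - 2 log (γ + a)` is constant on
`(0, ∞)`. It equals `∫ p_γ(x) log (1 + (x / a)²) dx - 2 log (1 + γ / a)`, which tends to `0` as
`a → ∞` by dominated convergence, so the constant is `0`.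
-/

open MeasureTheory Real

noncomputable def cauchyScale (γ : ℝ) (x : ℝ) : ℝ := γ / (Real.pi * (γ ^ 2 + x ^ 2))

open Set Filter Topology ProbabilityTheory

theorem eq_of_tendsto_of_hasDerivAt_zero_off_countable {E : Type*} [NormedAddCommGroup E]
    [NormedSpace ℝ E] [CompleteSpace E] {f : ℝ → E} {a : ℝ} {c : E} {s : Set ℝ}
    (hs : s.Countable) (hf : ContinuousOn f (Ici a)) (hf' : ∀ x ∈ Ioi a \ s, HasDerivAt f 0 x)
    (hlim : Tendsto f atTop (𝓝 c)) : f a = c := by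
  refine tendsto_nhds_unique (tendsto_const_nhds.congr' ?_) hlim
  filter_upwards [eventually_ge_atTop a] with b hb
  have := integral_eq_of_hasDerivAt_off_countable_of_le f 0 hb hs (hf.mono Icc_subset_Ici_self)
    (fun x hx => hf' x ⟨hx.1.1, hx.2⟩) intervalIntegrable_const
  simpa [eq_comm, sub_eq_zero] using this

lemma two_mul_sqrt_mul_le_add {x y : ℝ} (hx : 0 ≤ x) (hy : 0 ≤ y) : 2 * √(x * y) ≤ x + y := by
  simpa [sqrt_mul hx, ← mul_assoc, sq_sqrt hx, sq_sqrt hy] using two_mul_le_add_sq √x √y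

section

variable {γ a : ℝ}

@[fun_prop]
lemma measurable_cauchyScale : Measurable (cauchyScale γ) := by
  unfold cauchyScale; fun_prop

lemma cauchyScale_eq_cauchyPDFReal (hγ : 0 ≤ γ) : cauchyScale γ = cauchyPDFReal 0 γ.toNNReal := by
  ext x
  simp [cauchyScale, cauchyPDFReal, hγ, div_eq_mul_inv]
  ring

lemma integrable_cauchyScale (hγ : 0 ≤ γ) : Integrable (cauchyScale γ) := by
  rw [cauchyScale_eq_cauchyPDFReal hγ]
  exact integrable_cauchyPDFReal _

lemma integral_cauchyScale (hγ : 0 < γ) : ∫ x, cauchyScale γ x = 1 := by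
  rw [cauchyScale_eq_cauchyPDFReal hγ.le]
  exact integral_cauchyPDFReal_eq_one _ (by simpa using hγ)

lemma cauchyScale_pos (hγ : 0 < γ) (x : ℝ) : 0 < cauchyScale γ x := by
  unfold cauchyScale; positivity

lemma cauchyScale_le_mul_cauchyScale_one (hγ : 0 < γ) (x : ℝ) :
    cauchyScale γ x ≤ (γ + γ⁻¹) * cauchyScale 1 x := by
  unfold cauchyScale
  rw [div_le_iff₀ (by positivity)]
  field_simp
  nlinarith [pow_pos hγ 3, mul_nonneg hγ.le (sq_nonneg x)]

lemma integrable_cauchyScale_one_mul_log_one_add_sq :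
    Integrable fun x => cauchyScale 1 x * log (1 + x ^ 2) := by
  refine ((integrable_rpow_neg_one_add_norm_sq (E := ℝ) (μ := volume) (r := 3 / 2)
    (by norm_num)).const_mul (4 / π)).mono' (by fun_prop) (.of_forall fun x => ?_)
  have h1 : 0 < 1 + x ^ 2 := by positivity
  have hp := (cauchyScale_pos one_pos x).le
  rw [norm_of_nonneg (mul_nonneg hp (log_nonneg (by nlinarith))), norm_eq_abs, sq_abs,
    show -(3 / 2 : ℝ) / 2 = 1 / 4 - 1 by norm_num, rpow_sub_one h1.ne']
  calc cauchyScale 1 x * log (1 + x ^ 2)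
      ≤ cauchyScale 1 x * ((1 + x ^ 2) ^ (1 / 4 : ℝ) / (1 / 4)) :=
        mul_le_mul_of_nonneg_left (log_le_rpow_div h1.le (by norm_num)) hp
    _ = 4 / π * ((1 + x ^ 2) ^ (1 / 4 : ℝ) / (1 + x ^ 2)) := by
        unfold cauchyScale; field_simp

lemma abs_log_sq_add_sq_le (ha : a ≠ 0) (x : ℝ) :
    |log (a ^ 2 + x ^ 2)| ≤ |log (a ^ 2)| + log (1 + a ^ 2) + log (1 + x ^ 2) := by
  have ha2 : 0 < a ^ 2 := by positivity
  have hlow : log (a ^ 2) ≤ log (a ^ 2 + x ^ 2) := log_le_log ha2 (by nlinarith)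
  have hup : log (a ^ 2 + x ^ 2) ≤ log (1 + a ^ 2) + log (1 + x ^ 2) := by
    rw [← log_mul (by positivity) (by positivity)]
    exact log_le_log (by positivity) (by nlinarith [mul_nonneg ha2.le (sq_nonneg x)])
  have : 0 ≤ log (1 + a ^ 2) := log_nonneg (by nlinarith)
  have : 0 ≤ log (1 + x ^ 2) := log_nonneg (by nlinarith)
  rw [abs_le]
  constructor <;> linarith [neg_abs_le (log (a ^ 2)), le_abs_self (log (a ^ 2))]

lemma integrable_cauchyScale_mul_log_sq_add_sq (hγ : 0 < γ) (ha : a ≠ 0) :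
    Integrable fun x => cauchyScale γ x * log (a ^ 2 + x ^ 2) := by
  set C := |log (a ^ 2)| + log (1 + a ^ 2)
  have hC : 0 ≤ C := add_nonneg (abs_nonneg _) (log_nonneg (by nlinarith))
  refine ((((integrable_cauchyScale zero_le_one).const_mul C).add
    integrable_cauchyScale_one_mul_log_one_add_sq).const_mul (γ + γ⁻¹)).mono' (by fun_prop)
    (.of_forall fun x => ?_)
  have hlog : 0 ≤ C + log (1 + x ^ 2) := add_nonneg hC (log_nonneg (by nlinarith))
  rw [norm_mul, norm_of_nonneg (cauchyScale_pos hγ x).le, Real.norm_eq_abs]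
  calc cauchyScale γ x * |log (a ^ 2 + x ^ 2)| ≤ cauchyScale γ x * (C + log (1 + x ^ 2)) :=
        mul_le_mul_of_nonneg_left (abs_log_sq_add_sq_le ha x) (cauchyScale_pos hγ x).le
    _ ≤ (γ + γ⁻¹) * cauchyScale 1 x * (C + log (1 + x ^ 2)) :=
        mul_le_mul_of_nonneg_right (cauchyScale_le_mul_cauchyScale_one hγ x) hlog
    _ = _ := by simp only [Pi.add_apply]; ring

lemma hasDerivAt_integral_cauchyScale_mul_log_sq_add_sq (hγ : 0 < γ) (ha : 0 < a) :
    HasDerivAt (fun b => ∫ x, cauchyScale γ x * log (b ^ 2 + x ^ 2))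
      (∫ x, cauchyScale γ x * (2 * a / (a ^ 2 + x ^ 2))) a := by
  refine (hasDerivAt_integral_of_dominated_loc_of_deriv_le
    (F := fun b x => cauchyScale γ x * log (b ^ 2 + x ^ 2))
    (F' := fun b x => cauchyScale γ x * (2 * b / (b ^ 2 + x ^ 2))) (Ioi_mem_nhds (half_lt_self ha))
    (.of_forall fun b => by fun_prop) (integrable_cauchyScale_mul_log_sq_add_sq hγ ha.ne')
    (by fun_prop) ?_ ((integrable_cauchyScale hγ.le).const_mul (4 / a)) ?_).2
  · refine .of_forall fun x b (hb : a / 2 < b) => ?_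
    have hb0 : 0 < b := by linarith
    rw [norm_mul, norm_of_nonneg (cauchyScale_pos hγ x).le, mul_comm]
    gcongr
    · exact (cauchyScale_pos hγ x).le
    rw [norm_of_nonneg (by positivity), div_le_div_iff₀ (by positivity) ha]
    nlinarith [mul_nonneg (sq_nonneg x) ha.le]
  · refine .of_forall fun x b (hb : a / 2 < b) => ?_
    have hb0 : 0 < b := by linarith
    have := (((hasDerivAt_pow 2 b).add_const (x ^ 2)).log (by positivity)).const_mul
      (cauchyScale γ x)
    simpa using this

lemma integral_cauchyScale_mul_div_sq_add_sq (hγ : 0 < γ) (ha : 0 < a) (hne : a ≠ γ) :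
    ∫ x, cauchyScale γ x * (2 * a / (a ^ 2 + x ^ 2)) = 2 / (γ + a) := by
  have hsq : a ^ 2 - γ ^ 2 ≠ 0 := by
    rw [sq_sub_sq]; exact mul_ne_zero (by positivity) (sub_ne_zero.2 hne)
  have hpf : (fun x => cauchyScale γ x * (2 * a / (a ^ 2 + x ^ 2)))
      = fun x => 2 / (a ^ 2 - γ ^ 2) * (a * cauchyScale γ x - γ * cauchyScale a x) := by
    ext x
    unfold cauchyScale
    have : 0 < γ ^ 2 + x ^ 2 := by positivity
    have : 0 < a ^ 2 + x ^ 2 := by positivity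
    field_simp
    ring
  rw [hpf, integral_const_mul, integral_sub ((integrable_cauchyScale hγ.le).const_mul _)
    ((integrable_cauchyScale ha.le).const_mul _), integral_const_mul, integral_const_mul,
    integral_cauchyScale hγ, integral_cauchyScale ha]
  have : γ + a ≠ 0 := by positivity
  field_simp
  ring

lemma log_one_add_div_sq (ha : a ≠ 0) (x : ℝ) :
    log (1 + (x / a) ^ 2) = log (a ^ 2 + x ^ 2) - log (a ^ 2) := by
  rw [← log_div (by positivity) (by positivity)]
  congr 1
  field_simp

lemma integrable_cauchyScale_mul_log_one_add_div_sq (hγ : 0 < γ) (ha : a ≠ 0) :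
    Integrable fun x => cauchyScale γ x * log (1 + (x / a) ^ 2) := by
  simp_rw [log_one_add_div_sq ha, mul_sub]
  exact (integrable_cauchyScale_mul_log_sq_add_sq hγ ha).sub
    ((integrable_cauchyScale hγ.le).mul_const _)

lemma integral_cauchyScale_mul_log_one_add_div_sq (hγ : 0 < γ) (ha : a ≠ 0) :
    ∫ x, cauchyScale γ x * log (1 + (x / a) ^ 2)
      = (∫ x, cauchyScale γ x * log (a ^ 2 + x ^ 2)) - log (a ^ 2) := by
  simp_rw [log_one_add_div_sq ha, mul_sub]
  rw [integral_sub (integrable_cauchyScale_mul_log_sq_add_sq hγ ha)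
    ((integrable_cauchyScale hγ.le).mul_const _), integral_mul_const, integral_cauchyScale hγ,
    one_mul]

lemma tendsto_integral_cauchyScale_mul_log_one_add_div_sq (hγ : 0 < γ) :
    Tendsto (fun a => ∫ x, cauchyScale γ x * log (1 + (x / a) ^ 2)) atTop (𝓝 0) := by
  rw [← integral_zero ℝ ℝ]
  refine tendsto_integral_filter_of_dominated_convergence _ (.of_forall fun a => by fun_prop) ?_
    (integrable_cauchyScale_mul_log_one_add_div_sq hγ hγ.ne') (.of_forall fun x => ?_)
  · filter_upwards [eventually_ge_atTop γ] with a ha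
    refine .of_forall fun x => ?_
    have hp := (cauchyScale_pos hγ x).le
    rw [norm_of_nonneg (mul_nonneg hp (log_nonneg (by nlinarith))), div_pow, div_pow]
    gcongr
  · have := (((tendsto_const_nhds (x := x)).div_atTop tendsto_id).pow 2 |>.const_add 1).log
      (by norm_num) |>.const_mul (cauchyScale γ x)
    simpa using this

theorem integral_cauchyScale_mul_log_sq_add_sq (hγ : 0 < γ) (ha : 0 < a) :
    ∫ x, cauchyScale γ x * log (a ^ 2 + x ^ 2) = 2 * log (γ + a) := by
  set F := fun b => (∫ x, cauchyScale γ x * log (b ^ 2 + x ^ 2)) - 2 * log (γ + b)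
  have hF' (b : ℝ) (hb : 0 < b) : HasDerivAt F
      ((∫ x, cauchyScale γ x * (2 * b / (b ^ 2 + x ^ 2))) - 2 * (1 / (γ + b))) b :=
    (hasDerivAt_integral_cauchyScale_mul_log_sq_add_sq hγ hb).sub
      ((((hasDerivAt_id b).const_add γ).log (by positivity)).const_mul 2)
  have hF (b : ℝ) (hb : 0 < b) : F b
      = (∫ x, cauchyScale γ x * log (1 + (x / b) ^ 2)) - 2 * log (1 + γ / b) := by
    rw [integral_cauchyScale_mul_log_one_add_div_sq hγ hb.ne',
      show 1 + γ / b = (γ + b) / b by field_simp; ring, log_div (by positivity) hb.ne', log_pow]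
    push_cast
    ring
  suffices F a = 0 by linarith
  -- At `b = γ` the partial fractions of `integral_cauchyScale_mul_div_sq_add_sq` degenerate.
  refine eq_of_tendsto_of_hasDerivAt_zero_off_countable (countable_singleton γ)
    (fun b (hb : a ≤ b) => (hF' b (by linarith)).continuousAt.continuousWithinAt)
    (fun b ⟨(hb : a < b), (hbγ : b ≠ γ)⟩ => ?_) ?_
  · refine (hF' b (by linarith)).congr_deriv ?_
    rw [integral_cauchyScale_mul_div_sq_add_sq hγ (by linarith) hbγ]
    ring
  · have hlog := ((tendsto_const_nhds (x := γ)).div_atTop tendsto_id |>.const_add 1).log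
      (by norm_num) |>.const_mul 2
    refine ((tendsto_integral_cauchyScale_mul_log_one_add_div_sq hγ).sub hlog).congr' ?_
      |>.trans (by simp)
    filter_upwards [eventually_gt_atTop 0] with b hb
    exact (hF b hb).symm

end

lemma log_cauchyScale_div_cauchyScale {γ₁ γ₂ : ℝ} (h₁ : 0 < γ₁) (h₂ : 0 < γ₂) (x : ℝ) :
    log (cauchyScale γ₁ x / cauchyScale γ₂ x)
      = log (γ₁ / γ₂) + log (γ₂ ^ 2 + x ^ 2) - log (γ₁ ^ 2 + x ^ 2) := by
  rw [← log_mul (by positivity) (by positivity), ← log_div (by positivity) (by positivity)]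
  congr 1
  unfold cauchyScale
  field_simp

theorem integral_cauchyScale_mul_log_div_cauchyScale {γ₁ γ₂ : ℝ} (h₁ : 0 < γ₁) (h₂ : 0 < γ₂) :
    ∫ x, cauchyScale γ₁ x * log (cauchyScale γ₁ x / cauchyScale γ₂ x)
      = 2 * log ((γ₁ + γ₂) / (2 * √(γ₁ * γ₂))) := by
  have hC := (integrable_cauchyScale h₁.le).mul_const (log (γ₁ / γ₂))
  have hA := integrable_cauchyScale_mul_log_sq_add_sq h₁ h₂.ne'
  have hCA : Integrable fun x =>
      cauchyScale γ₁ x * log (γ₁ / γ₂) + cauchyScale γ₁ x * log (γ₂ ^ 2 + x ^ 2) := hC.add hA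
  have hB := integrable_cauchyScale_mul_log_sq_add_sq h₁ h₁.ne'
  simp_rw [log_cauchyScale_div_cauchyScale h₁ h₂, mul_sub, mul_add]
  rw [integral_sub hCA hB, integral_add hC hA, integral_mul_const, integral_cauchyScale h₁,
    integral_cauchyScale_mul_log_sq_add_sq h₁ h₂, integral_cauchyScale_mul_log_sq_add_sq h₁ h₁,
    ← two_mul, log_mul two_ne_zero h₁.ne', log_div h₁.ne' h₂.ne',
    log_div (by positivity) (by positivity), log_mul two_ne_zero (by positivity),
    log_sqrt (by positivity), log_mul h₁.ne' h₂.ne']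
  ring

/-- The KL divergence between scale Cauchy densities is
`2 log((γ₁+γ₂)/(2√(γ₁γ₂)))`; it is symmetric and nonnegative. -/
theorem KL_scale_cauchy
    (γ₁ γ₂ : ℝ) (h₁ : 0 < γ₁) (h₂ : 0 < γ₂) :
    (∫ x, cauchyScale γ₁ x * Real.log (cauchyScale γ₁ x / cauchyScale γ₂ x)
      = 2 * Real.log ((γ₁ + γ₂) / (2 * Real.sqrt (γ₁ * γ₂)))) ∧
    (∫ x, cauchyScale γ₁ x * Real.log (cauchyScale γ₁ x / cauchyScale γ₂ x)
      = ∫ x, cauchyScale γ₂ x * Real.log (cauchyScale γ₂ x / cauchyScale γ₁ x)) ∧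
    (0 ≤ ∫ x, cauchyScale γ₁ x * Real.log (cauchyScale γ₁ x / cauchyScale γ₂ x)) := by
  have hKL := integral_cauchyScale_mul_log_div_cauchyScale h₁ h₂
  refine ⟨hKL, ?_, ?_⟩
  · rw [hKL, integral_cauchyScale_mul_log_div_cauchyScale h₂ h₁, add_comm, mul_comm γ₂]
  · rw [hKL]
    have hAMGM := two_mul_sqrt_mul_le_add h₁.le h₂.le
    exact mul_nonneg zero_le_two (log_nonneg ((one_le_div (by positivity)).2 hAMGM))
end

section
/- Let f : (0,∞) → ℝ be convex, let p and q be μ-almost everywhere positive probability densities with respect to μ, let α ∈ (0,1), and write (pq)_α = (1−α)p + αq. Then the α-skew Jensen–Shannon symmetrization of the f-divergence I_f is itself an f-divergence: pointwise, (1−α)·p·f((pq)_α/p) + α·q·f((pq)_α/q) = p·g(q/p) where g(u) = (1−α)f(αu + 1−α) + α·u·f(α + (1−α)/u); consequently, whenever the integrals exist, (1−α)·I_f(p : (pq)_α) + α·I_f(q : (pq)_α) = I_g(p:q). -/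
open MeasureTheory Real

/-- The α-skew Jensen–Shannon symmetrization of an f-divergence is itself
an f-divergence: pointwise (on positive values)
`(1−α)·p·f((pq)_α/p) + α·q·f((pq)_α/q) = p·g(q/p)` with
`g(u) = (1−α)f(αu+1−α) + α·u·f(α+(1−α)/u)`, hence the integrals agree whenever they
exist. -/
theorem JS_symmetrization_of_f_divergence
    {X : Type*} [MeasurableSpace X] (μ : Measure X)
    (f : ℝ → ℝ) (hf : ConvexOn ℝ (Set.Ioi (0 : ℝ)) f)
    (p q : X → ℝ) (hpm : Measurable p) (hqm : Measurable q)
    (hp0 : ∀ᵐ x ∂μ, 0 < p x) (hq0 : ∀ᵐ x ∂μ, 0 < q x)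
    (hp1 : ∫ x, p x ∂μ = 1) (hq1 : ∫ x, q x ∂μ = 1)
    (α : ℝ) (hα : α ∈ Set.Ioo (0 : ℝ) 1)
    (g : ℝ → ℝ)
    (hg : ∀ u, g u = (1 - α) * f (α * u + 1 - α) + α * u * f (α + (1 - α) / u)) :
    (∀ x, 0 < p x → 0 < q x →
      (1 - α) * p x * f (((1 - α) * p x + α * q x) / p x)
        + α * q x * f (((1 - α) * p x + α * q x) / q x)
      = p x * g (q x / p x)) ∧
    (Integrable (fun x => p x * f (((1 - α) * p x + α * q x) / p x)) μ →
     Integrable (fun x => q x * f (((1 - α) * p x + α * q x) / q x)) μ →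
      (1 - α) * ∫ x, p x * f (((1 - α) * p x + α * q x) / p x) ∂μ
        + α * ∫ x, q x * f (((1 - α) * p x + α * q x) / q x) ∂μ
      = ∫ x, p x * g (q x / p x) ∂μ) := by
  have key : ∀ x, 0 < p x → 0 < q x →
      (1 - α) * p x * f (((1 - α) * p x + α * q x) / p x)
        + α * q x * f (((1 - α) * p x + α * q x) / q x)
      = p x * g (q x / p x) := by
    intro x hpx hqx
    have hp' := hpx.ne'
    have hq' := hqx.ne'
    have h1 : ((1 - α) * p x + α * q x) / p x = α * (q x / p x) + 1 - α := by
      field_simp; ring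
    have h2 : ((1 - α) * p x + α * q x) / q x = α + (1 - α) / (q x / p x) := by
      rw [div_div_eq_mul_div]
      field_simp
      ring
    rw [hg, h1, h2]
    field_simp
  refine ⟨key, fun h1 h2 => ?_⟩
  have hae : (fun x => p x * g (q x / p x))
      =ᵐ[μ] fun x => (1 - α) * (p x * f (((1 - α) * p x + α * q x) / p x))
        + α * (q x * f (((1 - α) * p x + α * q x) / q x)) := by
    filter_upwards [hp0, hq0] with x hpx hqx
    have := key x hpx hqx
    linarith [this]
  rw [integral_congr_ae hae, integral_add (h1.const_mul _) (h2.const_mul _)]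
  simp [integral_const_mul]
end
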